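/- arXiv:2302.04392 — 6 statements merged into one kernel-verified Lean document; each statement's English description precedes it below -/
import Mathlib

section
/- Let ϑ ∈ [0,∞) and γ₀, γ₁ ∈ (−∞, 1). Then there exists a constant C = C(ϑ, γ₀, γ₁) > 0 such that for all λ > 0 and t > 0, ∫₀ᵗ min((λ(t−s))^{−ϑ}, 1) · (min(s,1))^{−γ₀} · (max(s,1))^{−γ₁} ds ≤ C · ℓ_ϑ(λt) · (min(t,1))^{1−γ₀} · (max(t,1))^{1−γ₁}. -/
open MeasureTheory
open scoped ENNReal

/-- The function `ℓ_ϑ(r) = (max r 1)^{-min(ϑ,1)} (1 + 𝟙_{ϑ=1} log(max r 1))`. -/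
noncomputable def ell (ϑ r : ℝ) : ℝ :=
  (max r 1) ^ (-(min ϑ 1)) * (1 + (if ϑ = 1 then (1 : ℝ) else 0) * Real.log (max r 1))

/-!
Split `(0, t)` at `t / 2`. For `s ≤ t / 2` the kernel is at most `2 ℓ_ϑ(λt)`, and the weight
`w(s) = (min s 1)^{-γ₀} (max s 1)^{-γ₁}` satisfies `w(s) ≤ (s/t)^{-a} w(t)` with
`a = max γ₀ γ₁ < 1`, so `∫₀ᵗ w ≤ t w(t) / (1 - a)`. For `s > t / 2` the same comparison with
`a = 1` gives `w(s) ≤ 2 w(t)`, while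
`∫₀ᵗ min((λu)^{-ϑ}, 1) du = λ⁻¹ ∫₀^{λt} min(v^{-ϑ}, 1) dv ≤ c t ℓ_ϑ(λt)`: the three regimes
`ϑ < 1`, `ϑ = 1`, `ϑ > 1` of `∫₁^R v^{-ϑ} dv` are what the shape of `ℓ_ϑ` records.
Since `t w(t) = (min t 1)^{1-γ₀} (max t 1)^{1-γ₁}`, both pieces have the claimed size.
-/

open Real Set intervalIntegral

theorem setLIntegral_Ioo_mul_le {k f : ℝ → ℝ≥0∞} {a m b : ℝ} {K F : ℝ≥0∞}
    (ham : a ≤ m) (hmb : m < b) (hK : K ≠ ∞) (hF : F ≠ ∞)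
    (hk : ∀ s ∈ Ioc a m, k s ≤ K) (hf : ∀ s ∈ Ioo m b, f s ≤ F) :
    ∫⁻ s in Ioo a b, k s * f s ≤
      K * (∫⁻ s in Ioo a b, f s) + F * ∫⁻ s in Ioo a b, k s := by
  have hdisj : Disjoint (Ioc a m) (Ioo m b) := Ioc_disjoint_Ioi_same.mono_right Ioo_subset_Ioi_self
  rw [← Ioc_union_Ioo_eq_Ioo ham hmb, lintegral_union measurableSet_Ioo hdisj]
  refine add_le_add ?_ ?_
  · calc ∫⁻ s in Ioc a m, k s * f s ≤ ∫⁻ s in Ioc a m, K * f s :=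
          setLIntegral_mono' measurableSet_Ioc fun s hs => by gcongr; exact hk s hs
      _ = K * ∫⁻ s in Ioc a m, f s := lintegral_const_mul' _ _ hK
      _ ≤ K * ∫⁻ s in Ioc a m ∪ Ioo m b, f s := by gcongr; exact subset_union_left
  · calc ∫⁻ s in Ioo m b, k s * f s ≤ ∫⁻ s in Ioo m b, F * k s :=
          setLIntegral_mono' measurableSet_Ioo fun s hs => by
            rw [mul_comm]; gcongr; exact hf s hs
      _ = F * ∫⁻ s in Ioo m b, k s := lintegral_const_mul' _ _ hF
      _ ≤ F * ∫⁻ s in Ioc a m ∪ Ioo m b, k s := by gcongr; exact subset_union_right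

theorem lintegral_Ioo_ofReal_eq {f : ℝ → ℝ} {a b : ℝ} (hab : a ≤ b)
    (hf : IntegrableOn f (Ioo a b)) (hf₀ : ∀ x ∈ Ioo a b, 0 ≤ f x) :
    ∫⁻ x in Ioo a b, ENNReal.ofReal (f x) = ENNReal.ofReal (∫ x in a..b, f x) := by
  rw [integral_of_le hab, integral_Ioc_eq_integral_Ioo,
    ofReal_integral_eq_lintegral_ofReal hf (ae_restrict_of_forall_mem measurableSet_Ioo hf₀)]

theorem ell_of_le_one (ϑ : ℝ) {r : ℝ} (hr : r ≤ 1) : ell ϑ r = 1 := by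
  simp [ell, max_eq_right hr]

theorem one_le_ell_factor (ϑ r : ℝ) :
    1 ≤ 1 + (if ϑ = 1 then (1 : ℝ) else 0) * Real.log (max r 1) := by
  have := Real.log_nonneg (le_max_right r 1)
  split_ifs <;> linarith

theorem rpow_le_ell (ϑ r : ℝ) : (max r 1) ^ (-(min ϑ 1)) ≤ ell ϑ r :=
  le_mul_of_one_le_right (by positivity) (one_le_ell_factor ϑ r)

theorem ell_nonneg (ϑ r : ℝ) : 0 ≤ ell ϑ r :=
  (by positivity : (0 : ℝ) ≤ (max r 1) ^ (-(min ϑ 1))).trans (rpow_le_ell ϑ r)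

theorem mul_ell_of_one_le (ϑ : ℝ) {r : ℝ} (hr : 1 ≤ r) :
    r * ell ϑ r = r ^ (1 - min ϑ 1) * (1 + (if ϑ = 1 then (1 : ℝ) else 0) * Real.log r) := by
  rw [ell, max_eq_left hr, ← mul_assoc, sub_eq_add_neg, rpow_add (by linarith), rpow_one]

theorem one_le_mul_ell (ϑ : ℝ) {r : ℝ} (hr : 1 ≤ r) : 1 ≤ r * ell ϑ r := by
  rw [mul_ell_of_one_le ϑ hr]
  have h := one_le_ell_factor ϑ r
  rw [max_eq_left hr] at h
  exact one_le_mul_of_one_le_of_one_le (one_le_rpow hr (by simp)) h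

theorem min_rpow_neg_le_two_mul_ell {ϑ R x : ℝ} (hϑ : 0 ≤ ϑ) (hR : 0 < R) (hx : R / 2 ≤ x) :
    min (x ^ (-ϑ)) 1 ≤ 2 * ell ϑ R := by
  set θ := min ϑ 1
  have hθ : 0 ≤ θ := le_min hϑ zero_le_one
  have hx₀ : 0 < x := by linarith
  calc min (x ^ (-ϑ)) 1 ≤ (max x 1) ^ (-θ) := by
        rcases le_total x 1 with hx₁ | hx₁
        · simp [max_eq_right hx₁]
        · rw [max_eq_left hx₁]
          exact (min_le_left _ _).trans
            (rpow_le_rpow_of_exponent_le hx₁ (neg_le_neg (min_le_left _ _)))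
    _ ≤ (max R 1 / 2) ^ (-θ) := by
        refine rpow_le_rpow_of_nonpos (by positivity) ?_ (by linarith)
        rw [div_le_iff₀ two_pos]
        exact max_le (by linarith [le_max_left x 1]) (by linarith [le_max_right x 1])
    _ = 2 ^ θ * (max R 1) ^ (-θ) := by
        rw [div_rpow (by positivity) zero_le_two, rpow_neg zero_le_two, div_inv_eq_mul, mul_comm]
    _ ≤ 2 * ell ϑ R := by
        gcongr
        · exact rpow_le_self_of_one_le one_le_two (min_le_right _ _)
        · exact rpow_le_ell ϑ R

noncomputable def weight (γ₀ γ₁ s : ℝ) : ℝ := (min s 1) ^ (-γ₀) * (max s 1) ^ (-γ₁)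

theorem weight_nonneg (γ₀ γ₁ : ℝ) {s : ℝ} (hs : 0 ≤ s) : 0 ≤ weight γ₀ γ₁ s := by
  unfold weight; positivity

theorem mul_weight (γ₀ γ₁ : ℝ) {t : ℝ} (ht : 0 < t) :
    t * weight γ₀ γ₁ t = (min t 1) ^ (1 - γ₀) * (max t 1) ^ (1 - γ₁) := by
  have hm : 0 < min t 1 := lt_min ht one_pos
  have hM : 0 < max t 1 := lt_max_of_lt_right one_pos
  rw [sub_eq_add_neg, sub_eq_add_neg, rpow_add hm, rpow_add hM, rpow_one, rpow_one, weight]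
  nth_rewrite 1 [← mul_one t, ← min_mul_max t 1]
  ring

theorem weight_le_div_rpow_mul {γ₀ γ₁ a s t : ℝ} (ha₀ : γ₀ ≤ a) (ha₁ : γ₁ ≤ a) (hs : 0 < s)
    (hst : s ≤ t) : weight γ₀ γ₁ s ≤ (s / t) ^ (-a) * weight γ₀ γ₁ t := by
  have ht : 0 < t := hs.trans_le hst
  set ρ₀ := min s 1 / min t 1
  set ρ₁ := max s 1 / max t 1
  have hmt : 0 < min t 1 := lt_min ht one_pos
  have hMt : 0 < max t 1 := lt_max_of_lt_right one_pos
  have hρ₀ : 0 < ρ₀ := div_pos (lt_min hs one_pos) hmt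
  have hρ₁ : 0 < ρ₁ := div_pos (lt_max_of_lt_right one_pos) hMt
  have hρ₀₁ : ρ₀ ≤ 1 := div_le_one_of_le₀ (min_le_min_right 1 hst) hmt.le
  have hρ₁₁ : ρ₁ ≤ 1 := div_le_one_of_le₀ (max_le_max_right 1 hst) hMt.le
  have hprod : ρ₀ * ρ₁ = s / t := by
    rw [div_mul_div_comm, min_mul_max, min_mul_max, mul_one, mul_one]
  calc weight γ₀ γ₁ s = ρ₀ ^ (-γ₀) * ρ₁ ^ (-γ₁) * weight γ₀ γ₁ t := by
        rw [weight, weight, div_rpow (lt_min hs one_pos).le hmt.le,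
          div_rpow (lt_max_of_lt_right one_pos).le hMt.le]
        field_simp
    _ ≤ ρ₀ ^ (-a) * ρ₁ ^ (-a) * weight γ₀ γ₁ t := by
        refine mul_le_mul_of_nonneg_right (mul_le_mul ?_ ?_ (by positivity) (by positivity))
          (weight_nonneg γ₀ γ₁ ht.le)
        · exact rpow_le_rpow_of_exponent_ge hρ₀ hρ₀₁ (neg_le_neg ha₀)
        · exact rpow_le_rpow_of_exponent_ge hρ₁ hρ₁₁ (neg_le_neg ha₁)
    _ = (s / t) ^ (-a) * weight γ₀ γ₁ t := by rw [← mul_rpow hρ₀.le hρ₁.le, hprod]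

theorem weight_le_two_mul {γ₀ γ₁ s t : ℝ} (h₀ : γ₀ ≤ 1) (h₁ : γ₁ ≤ 1) (ht : 0 < t)
    (hs : t / 2 ≤ s) (hst : s ≤ t) : weight γ₀ γ₁ s ≤ 2 * weight γ₀ γ₁ t := by
  have hs₀ : 0 < s := by linarith
  calc weight γ₀ γ₁ s ≤ (s / t) ^ (-1 : ℝ) * weight γ₀ γ₁ t :=
        weight_le_div_rpow_mul h₀ h₁ hs₀ hst
    _ ≤ 2 * weight γ₀ γ₁ t := by
        gcongr
        · exact weight_nonneg γ₀ γ₁ ht.le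
        · rw [rpow_neg_one, inv_div, div_le_iff₀ hs₀]
          linarith

theorem lintegral_Ioo_rpow_neg {a t : ℝ} (ha : a < 1) (ht : 0 ≤ t) :
    ∫⁻ s in Ioo 0 t, ENNReal.ofReal (s ^ (-a)) = ENNReal.ofReal (t ^ (1 - a) / (1 - a)) := by
  have hint : IntervalIntegrable (fun s : ℝ => s ^ (-a)) volume 0 t :=
    intervalIntegrable_rpow' (by linarith)
  rw [lintegral_Ioo_ofReal_eq ht
      (((intervalIntegrable_iff_integrableOn_Ioc_of_le ht).1 hint).mono_set Ioo_subset_Ioc_self)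
      (fun s hs => rpow_nonneg hs.1.le _),
    integral_rpow (Or.inl (by linarith)), zero_rpow (by linarith)]
  congr 1
  ring_nf

theorem lintegral_Ioo_weight_le {γ₀ γ₁ t : ℝ} (h₀ : γ₀ < 1) (h₁ : γ₁ < 1) (ht : 0 < t) :
    ∫⁻ s in Ioo 0 t, ENNReal.ofReal (weight γ₀ γ₁ s) ≤
      ENNReal.ofReal (t * weight γ₀ γ₁ t / (1 - max γ₀ γ₁)) := by
  set a := max γ₀ γ₁
  have ha : a < 1 := max_lt h₀ h₁
  have hw := weight_nonneg γ₀ γ₁ ht.le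
  calc ∫⁻ s in Ioo 0 t, ENNReal.ofReal (weight γ₀ γ₁ s)
      ≤ ∫⁻ s in Ioo 0 t, ENNReal.ofReal (t ^ a * weight γ₀ γ₁ t) * ENNReal.ofReal (s ^ (-a)) := by
        refine setLIntegral_mono' measurableSet_Ioo fun s hs => ?_
        rw [← ENNReal.ofReal_mul (by positivity)]
        refine ENNReal.ofReal_le_ofReal ((weight_le_div_rpow_mul (le_max_left _ _)
          (le_max_right _ _) hs.1 hs.2.le).trans_eq ?_)
        rw [div_rpow hs.1.le ht.le, rpow_neg ht.le, div_inv_eq_mul]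
        ring
    _ = ENNReal.ofReal (t * weight γ₀ γ₁ t / (1 - a)) := by
        rw [lintegral_const_mul' _ _ ENNReal.ofReal_ne_top, lintegral_Ioo_rpow_neg ha ht.le,
          ← ENNReal.ofReal_mul (by positivity)]
        congr 1
        rw [sub_eq_add_neg, rpow_add ht, rpow_one, rpow_neg ht.le]
        field_simp

theorem integrableOn_min_rpow_neg {g : ℝ → ℝ} (hg : Measurable g) (ϑ : ℝ) {S : Set ℝ}
    (hS : MeasurableSet S) (hS' : volume S ≠ ∞) (hg₀ : ∀ x ∈ S, 0 ≤ g x) :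
    IntegrableOn (fun x => min (g x ^ (-ϑ)) 1) S := by
  refine Measure.integrableOn_of_bounded hS' (by fun_prop : Measurable _).aestronglyMeasurable
    (M := 1) (ae_restrict_of_forall_mem hS fun x hx => ?_)
  rw [Real.norm_eq_abs, abs_le]
  exact ⟨by linarith [le_min (rpow_nonneg (hg₀ x hx) (-ϑ)) zero_le_one], min_le_right _ _⟩

theorem intervalIntegrable_min_rpow_neg (ϑ : ℝ) {a b : ℝ} (ha : 0 ≤ a) (hb : 0 ≤ b) :
    IntervalIntegrable (fun v : ℝ => min (v ^ (-ϑ)) 1) volume a b :=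
  ⟨integrableOn_min_rpow_neg measurable_id ϑ measurableSet_Ioc measure_Ioc_lt_top.ne
      fun _ hx => ha.trans hx.1.le,
    integrableOn_min_rpow_neg measurable_id ϑ measurableSet_Ioc measure_Ioc_lt_top.ne
      fun _ hx => hb.trans hx.1.le⟩

theorem integral_min_rpow_neg_le_sub (ϑ : ℝ) {a b : ℝ} (ha : 0 ≤ a) (hab : a ≤ b) :
    ∫ v in a..b, min (v ^ (-ϑ)) 1 ≤ b - a := by
  calc ∫ v in a..b, min (v ^ (-ϑ)) 1 ≤ ∫ _ in a..b, (1 : ℝ) :=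
        integral_mono_on hab (intervalIntegrable_min_rpow_neg ϑ ha (ha.trans hab))
          intervalIntegrable_const fun _ _ => min_le_right _ _
    _ = b - a := by simp

theorem integral_one_rpow_neg {ϑ R : ℝ} (hϑ : ϑ ≠ 1) (hR : 1 ≤ R) :
    ∫ v in (1 : ℝ)..R, v ^ (-ϑ) = (R ^ (1 - ϑ) - 1) / (1 - ϑ) := by
  have h0 : (0 : ℝ) ∉ uIcc 1 R := by rw [uIcc_of_le hR]; exact fun h => by linarith [h.1]
  rw [integral_rpow (Or.inr ⟨fun h => hϑ (by linarith), h0⟩), one_rpow, neg_add_eq_sub]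

theorem exists_integral_one_rpow_neg_le (ϑ : ℝ) :
    ∃ c, 0 ≤ c ∧ ∀ R, 1 ≤ R → ∫ v in (1 : ℝ)..R, v ^ (-ϑ) ≤ c * (R * ell ϑ R) := by
  rcases lt_trichotomy ϑ 1 with hϑ | rfl | hϑ
  · refine ⟨1 / (1 - ϑ), one_div_nonneg.2 (by linarith), fun R hR => ?_⟩
    rw [integral_one_rpow_neg hϑ.ne hR, mul_ell_of_one_le ϑ hR, min_eq_left hϑ.le,
      if_neg hϑ.ne, zero_mul, add_zero, mul_one, one_div_mul_eq_div]
    exact div_le_div_of_nonneg_right (by linarith) (by linarith)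
  · refine ⟨1, zero_le_one, fun R hR => ?_⟩
    have hlog : ∫ v in (1 : ℝ)..R, v ^ (-1 : ℝ) = Real.log R := by
      simp_rw [rpow_neg_one]
      rw [integral_inv_of_pos one_pos (by linarith), div_one]
    rw [hlog, mul_ell_of_one_le 1 hR]
    simp
  · refine ⟨1 / (ϑ - 1), one_div_nonneg.2 (by linarith), fun R hR => ?_⟩
    rw [integral_one_rpow_neg hϑ.ne' hR, mul_ell_of_one_le ϑ hR, min_eq_right hϑ.le,
      if_neg hϑ.ne', sub_self, rpow_zero, zero_mul, add_zero, mul_one, mul_one,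
      ← neg_div_neg_eq, neg_sub, neg_sub]
    exact div_le_div_of_nonneg_right (by linarith [rpow_nonneg (by linarith : (0 : ℝ) ≤ R) (1 - ϑ)])
      (by linarith)

theorem exists_integral_min_rpow_neg_le (ϑ : ℝ) :
    ∃ c, 0 < c ∧ ∀ R, 0 < R → ∫ v in (0 : ℝ)..R, min (v ^ (-ϑ)) 1 ≤ c * (R * ell ϑ R) := by
  obtain ⟨c, hc, htail⟩ := exists_integral_one_rpow_neg_le ϑ
  refine ⟨1 + c, by positivity, fun R hR => ?_⟩
  rcases le_or_gt R 1 with hR₁ | hR₁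
  · have hle := integral_min_rpow_neg_le_sub ϑ le_rfl hR.le
    rw [ell_of_le_one ϑ hR₁, mul_one]
    nlinarith
  · have hone := integral_min_rpow_neg_le_sub ϑ le_rfl zero_le_one
    have hmid : ∫ v in (1 : ℝ)..R, min (v ^ (-ϑ)) 1 ≤ ∫ v in (1 : ℝ)..R, v ^ (-ϑ) :=
      integral_mono_on hR₁.le (intervalIntegrable_min_rpow_neg ϑ zero_le_one hR.le)
        (intervalIntegrable_rpow (Or.inr (by
          rw [uIcc_of_le hR₁.le]; exact fun h => by linarith [h.1])))
        fun _ _ => min_le_left _ _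
    have htailR := htail R hR₁.le
    have hell := one_le_mul_ell ϑ hR₁.le
    rw [← integral_add_adjacent_intervals (intervalIntegrable_min_rpow_neg ϑ le_rfl zero_le_one)
      (intervalIntegrable_min_rpow_neg ϑ zero_le_one hR.le)]
    nlinarith

theorem exists_lintegral_Ioo_min_rpow_neg_le (ϑ : ℝ) :
    ∃ c, 0 < c ∧ ∀ lam t, 0 < lam → 0 < t →
      ∫⁻ s in Ioo 0 t, ENNReal.ofReal (min ((lam * (t - s)) ^ (-ϑ)) 1) ≤
        ENNReal.ofReal (c * (t * ell ϑ (lam * t))) := by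
  obtain ⟨c, hc, hint⟩ := exists_integral_min_rpow_neg_le ϑ
  refine ⟨c, hc, fun lam t hlam ht => ?_⟩
  have hpos : ∀ s ∈ Ioo 0 t, 0 ≤ lam * (t - s) := fun s hs => by nlinarith [hs.2]
  rw [lintegral_Ioo_ofReal_eq ht.le
    (integrableOn_min_rpow_neg (by fun_prop) ϑ measurableSet_Ioo measure_Ioo_lt_top.ne hpos)
    fun s hs => le_min (rpow_nonneg (hpos s hs) _) zero_le_one]
  refine ENNReal.ofReal_le_ofReal ?_
  have hsub : ∫ s in (0 : ℝ)..t, min ((lam * (t - s)) ^ (-ϑ)) 1 =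
      lam⁻¹ * ∫ v in (0 : ℝ)..lam * t, min (v ^ (-ϑ)) 1 := by
    rw [integral_comp_sub_left (fun u => min ((lam * u) ^ (-ϑ)) 1), sub_self, sub_zero,
      integral_comp_mul_left (fun v => min (v ^ (-ϑ)) 1) hlam.ne', mul_zero, smul_eq_mul]
  calc ∫ s in (0 : ℝ)..t, min ((lam * (t - s)) ^ (-ϑ)) 1
      ≤ lam⁻¹ * (c * (lam * t * ell ϑ (lam * t))) := by
        rw [hsub]; gcongr; exact hint _ (by positivity)
    _ = c * (t * ell ϑ (lam * t)) := by field_simp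

/-- for `ϑ ≥ 0` and `γ₀, γ₁ < 1` there is `C > 0` such that for all `λ, t > 0`,
`∫₀^t min((λ(t-s))^{-ϑ},1) (min s 1)^{-γ₀} (max s 1)^{-γ₁} ds
  ≤ C ℓ_ϑ(λt) (min t 1)^{1-γ₀} (max t 1)^{1-γ₁}`. -/
theorem stmt_2 (ϑ γ₀ γ₁ : ℝ) (hϑ : 0 ≤ ϑ) (h₀ : γ₀ < 1) (h₁ : γ₁ < 1) :
    ∃ C : ℝ, 0 < C ∧ ∀ lam t : ℝ, 0 < lam → 0 < t →
      (∫⁻ s in Set.Ioo (0 : ℝ) t,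
        ENNReal.ofReal (min ((lam * (t - s)) ^ (-ϑ)) 1 *
          (min s 1) ^ (-γ₀) * (max s 1) ^ (-γ₁))) ≤
      ENNReal.ofReal (C * ell ϑ (lam * t) * (min t 1) ^ (1 - γ₀) * (max t 1) ^ (1 - γ₁)) := by
  obtain ⟨c, hc, hkernel⟩ := exists_lintegral_Ioo_min_rpow_neg_le ϑ
  set a := max γ₀ γ₁
  have ha : 0 < 1 - a := sub_pos.2 (max_lt h₀ h₁)
  refine ⟨2 / (1 - a) + 2 * c, by positivity, fun lam t hlam ht => ?_⟩
  have hℓ := ell_nonneg ϑ (lam * t)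
  have hw := weight_nonneg γ₀ γ₁ ht.le
  have hk₀ : ∀ s ∈ Ioo 0 t, 0 ≤ min ((lam * (t - s)) ^ (-ϑ)) 1 := fun s hs =>
    le_min (rpow_nonneg (mul_nonneg hlam.le (sub_nonneg.2 hs.2.le)) _) zero_le_one
  calc _ = ∫⁻ s in Ioo 0 t, ENNReal.ofReal (min ((lam * (t - s)) ^ (-ϑ)) 1) *
          ENNReal.ofReal (weight γ₀ γ₁ s) :=
        setLIntegral_congr_fun measurableSet_Ioo fun s hs => by
          rw [mul_assoc, ENNReal.ofReal_mul (hk₀ s hs), weight]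
    _ ≤ ENNReal.ofReal (2 * ell ϑ (lam * t)) *
            (∫⁻ s in Ioo 0 t, ENNReal.ofReal (weight γ₀ γ₁ s)) +
          ENNReal.ofReal (2 * weight γ₀ γ₁ t) *
            ∫⁻ s in Ioo 0 t, ENNReal.ofReal (min ((lam * (t - s)) ^ (-ϑ)) 1) :=
        setLIntegral_Ioo_mul_le (half_pos ht).le (half_lt_self ht) ENNReal.ofReal_ne_top
          ENNReal.ofReal_ne_top
          (fun s hs => ENNReal.ofReal_le_ofReal
            (min_rpow_neg_le_two_mul_ell hϑ (mul_pos hlam ht) (by nlinarith [hs.2])))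
          (fun s hs => ENNReal.ofReal_le_ofReal (weight_le_two_mul h₀.le h₁.le ht hs.1.le hs.2.le))
    _ ≤ ENNReal.ofReal (2 * ell ϑ (lam * t)) * ENNReal.ofReal (t * weight γ₀ γ₁ t / (1 - a)) +
          ENNReal.ofReal (2 * weight γ₀ γ₁ t) * ENNReal.ofReal (c * (t * ell ϑ (lam * t))) := by
        gcongr
        · exact lintegral_Ioo_weight_le h₀ h₁ ht
        · exact hkernel lam t hlam ht
    _ = _ := by
        rw [← ENNReal.ofReal_mul (by positivity), ← ENNReal.ofReal_mul (by positivity),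
          ← ENNReal.ofReal_add (by positivity) (by positivity), mul_assoc _ ((min t 1) ^ _),
          ← mul_weight γ₀ γ₁ ht]
        congr 1
        field_simp
end

section
/- Let ϑ ∈ [0,∞) and γ < 1. Then there exists a constant C = C(ϑ, γ) > 0 such that for all λ > 0 and t > 0, ∫₀ᵗ min((λ(t−s))^{−ϑ}, 1) · s^{−γ} ds ≤ C · ℓ_ϑ(λt) · t^{1−γ}. -/
open MeasureTheory
open scoped ENNReal

/-!
Write `k(x) = min (x^{-ϑ}) 1`. For `s ≤ t/2` the kernel `k(λ(t-s))` is at most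
`k(λt/2) ≤ 2^ϑ ℓ_ϑ(λt)`, and `∫₀ᵗ s^{-γ} ds = t^{1-γ}/(1-γ)`. For `s ≥ t/2` the weight `s^{-γ}`
is comparable to `t^{-γ}`, and after reflection and rescaling
`∫₀ᵗ k(λu) du = λ⁻¹ ∫₀^{λt} k(v) dv ≤ λ⁻¹ (1 + ∫₁^{λt} v^{-ϑ} dv)`, which is `≲ t ℓ_ϑ(λt)` in each
of the regimes `ϑ < 1`, `ϑ = 1` (where the logarithm appears) and `ϑ > 1`.
-/

open Real Set intervalIntegral

lemma rpow_neg_min_le_ell (ϑ r : ℝ) : max r 1 ^ (-min ϑ 1) ≤ ell ϑ r := by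
  have hlog : 0 ≤ log (max r 1) := log_nonneg (le_max_right _ _)
  refine le_mul_of_one_le_right (rpow_nonneg (zero_le_one.trans (le_max_right _ _)) _) ?_
  split_ifs <;> linarith

lemma min_rpow_neg_le_ell (ϑ x : ℝ) : min (x ^ (-ϑ)) 1 ≤ ell ϑ x := by
  refine le_trans ?_ (rpow_neg_min_le_ell ϑ x)
  rcases le_total x 1 with hx | hx
  · simp [max_eq_right hx]
  · rw [max_eq_left hx]
    exact (min_le_left _ _).trans (rpow_le_rpow_of_exponent_le hx (neg_le_neg (min_le_left _ _)))

lemma div_rpow_neg {x c : ℝ} (hx : 0 ≤ x) (hc : 0 ≤ c) (a : ℝ) :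
    (x / c) ^ (-a) = c ^ a * x ^ (-a) := by
  rw [div_rpow hx hc, rpow_neg hc, div_inv_eq_mul, mul_comm]

lemma min_rpow_neg_div_le {ϑ c x : ℝ} (hϑ : 0 ≤ ϑ) (hc : 1 ≤ c) (hx : 0 ≤ x) :
    min ((x / c) ^ (-ϑ)) 1 ≤ c ^ ϑ * min (x ^ (-ϑ)) 1 := by
  rw [mul_min_of_nonneg _ _ (rpow_nonneg (by linarith) _), mul_one, div_rpow_neg hx (by linarith)]
  exact min_le_min_left _ (one_le_rpow hc hϑ)

lemma rpow_neg_le_of_half_le {γ s t : ℝ} (hs : t / 2 ≤ s) (hst : s ≤ t) (h0 : 0 < s) :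
    s ^ (-γ) ≤ (2 ^ γ + 1) * t ^ (-γ) := by
  have ht : 0 ≤ t ^ (-γ) := rpow_nonneg (h0.le.trans hst) _
  have h2 : 0 < (2 : ℝ) ^ γ := rpow_pos_of_pos two_pos _
  rcases le_total 0 γ with hγ | hγ
  · calc s ^ (-γ) ≤ (t / 2) ^ (-γ) := rpow_le_rpow_of_nonpos (by linarith) hs (by linarith)
      _ = 2 ^ γ * t ^ (-γ) := div_rpow_neg (by linarith) zero_le_two γ
      _ ≤ _ := by nlinarith
  · calc s ^ (-γ) ≤ t ^ (-γ) := rpow_le_rpow h0.le hst (by linarith)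
      _ ≤ _ := by nlinarith

lemma intervalIntegrable_min_rpow_neg_comp {ϑ a b : ℝ} {g : ℝ → ℝ} (hg : Measurable g)
    (hab : a ≤ b) (hg0 : ∀ x ∈ Ioc a b, 0 ≤ g x) :
    IntervalIntegrable (fun x => min (g x ^ (-ϑ)) 1) volume a b := by
  refine (intervalIntegrable_const (c := (1 : ℝ))).mono_fun'
    (by fun_prop : Measurable fun x => min (g x ^ (-ϑ)) 1).aestronglyMeasurable ?_
  rw [uIoc_of_le hab]
  filter_upwards [ae_restrict_mem measurableSet_Ioc] with x hx
  rw [norm_of_nonneg (le_min (rpow_nonneg (hg0 x hx) _) zero_le_one)]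
  exact min_le_right _ _

/-- At `ϑ = 1` the constant is `1`, since `|1 - ϑ|⁻¹ = 0⁻¹ = 0` in Lean. -/
lemma one_add_integral_rpow_neg_le {ϑ r : ℝ} (hr : 1 ≤ r) :
    1 + ∫ v in (1 : ℝ)..r, v ^ (-ϑ) ≤ (1 + |1 - ϑ|⁻¹) * (r * ell ϑ r) := by
  have hell : r * ell ϑ r = r ^ (1 - min ϑ 1) * (1 + (if ϑ = 1 then 1 else 0) * log r) := by
    rw [ell, max_eq_left hr, sub_eq_add_neg, rpow_add (by linarith), rpow_one]; ring
  have h0 : (0 : ℝ) ∉ uIcc 1 r := by rw [uIcc_of_le hr]; exact fun h => by linarith [h.1]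
  rcases lt_trichotomy ϑ 1 with h | rfl | h
  · have hx : 1 ≤ r ^ (1 - ϑ) := one_le_rpow hr (by linarith)
    have hd : 0 < (1 - ϑ)⁻¹ := inv_pos.2 (by linarith)
    rw [integral_rpow (Or.inl (by linarith)), hell, min_eq_left h.le, if_neg h.ne, one_rpow,
      show -ϑ + 1 = 1 - ϑ by ring, abs_of_pos (by linarith), div_eq_mul_inv]
    nlinarith
  · simp_rw [rpow_neg_one]
    rw [integral_inv_of_pos one_pos (by linarith), hell]
    simp
  · have hx : 0 ≤ r ^ (1 - ϑ) := rpow_nonneg (by linarith) _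
    rw [integral_rpow (Or.inr ⟨by linarith, h0⟩), hell, min_eq_right h.le, if_neg h.ne', one_rpow,
      show -ϑ + 1 = 1 - ϑ by ring, abs_of_neg (by linarith), sub_self, rpow_zero]
    rw [neg_sub, ← neg_div_neg_eq, neg_sub, neg_sub, div_eq_mul_inv]
    have hd : 0 < (ϑ - 1)⁻¹ := inv_pos.2 (by linarith)
    nlinarith

lemma integral_min_rpow_neg_le {ϑ r : ℝ} (hϑ : 0 ≤ ϑ) (hr : 0 ≤ r) :
    ∫ v in (0 : ℝ)..r, min (v ^ (-ϑ)) 1 ≤ (1 + |1 - ϑ|⁻¹) * (r * ell ϑ r) := by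
  have hint : ∀ a b : ℝ, 0 ≤ a → a ≤ b →
      IntervalIntegrable (fun v : ℝ => min (v ^ (-ϑ)) 1) volume a b := fun a b ha hab =>
    intervalIntegrable_min_rpow_neg_comp measurable_id hab fun v hv => ha.trans hv.1.le
  have hmin_le_one : ∀ a b : ℝ, 0 ≤ a → a ≤ b → ∫ v in a..b, min (v ^ (-ϑ)) 1 ≤ b - a :=
    fun a b ha hab => by
      simpa using integral_mono_on hab (hint a b ha hab) intervalIntegrable_const
        fun v _ => min_le_right (v ^ (-ϑ)) 1
  rcases le_or_gt r 1 with hr1 | hr1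
  · have hell : ell ϑ r = 1 := by simp [ell, max_eq_right hr1]
    have hC : 1 ≤ 1 + |1 - ϑ|⁻¹ := le_add_of_nonneg_right (by positivity)
    rw [hell, mul_one]
    nlinarith [hmin_le_one 0 r le_rfl hr]
  · have htail : ∫ v in (1 : ℝ)..r, min (v ^ (-ϑ)) 1 = ∫ v in (1 : ℝ)..r, v ^ (-ϑ) := by
      refine integral_congr fun v hv => min_eq_left ?_
      rw [uIcc_of_le hr1.le] at hv
      exact rpow_le_one_of_one_le_of_nonpos hv.1 (by linarith)
    rw [← integral_add_adjacent_intervals (hint 0 1 le_rfl zero_le_one)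
      (hint 1 r zero_le_one hr1.le), htail]
    linarith [hmin_le_one 0 1 le_rfl zero_le_one, one_add_integral_rpow_neg_le (ϑ := ϑ) hr1.le]

lemma integral_min_mul_rpow_neg_le {ϑ lam t : ℝ} (hϑ : 0 ≤ ϑ) (hlam : 0 < lam) (ht : 0 ≤ t) :
    ∫ u in (0 : ℝ)..t, min ((lam * u) ^ (-ϑ)) 1 ≤ (1 + |1 - ϑ|⁻¹) * (t * ell ϑ (lam * t)) := by
  rw [integral_comp_mul_left (fun v => min (v ^ (-ϑ)) 1) hlam.ne', mul_zero, smul_eq_mul]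
  calc lam⁻¹ * ∫ v in (0 : ℝ)..lam * t, min (v ^ (-ϑ)) 1
      ≤ lam⁻¹ * ((1 + |1 - ϑ|⁻¹) * (lam * t * ell ϑ (lam * t))) :=
        mul_le_mul_of_nonneg_left (integral_min_rpow_neg_le hϑ (by positivity)) (by positivity)
    _ = (1 + |1 - ϑ|⁻¹) * (t * ell ϑ (lam * t)) := by field_simp

-- Both halves `s ≤ t/2` and `s ≥ t/2` at once, so that the integral need not be split.
lemma min_rpow_neg_mul_rpow_neg_le {ϑ γ lam s t : ℝ} (hϑ : 0 ≤ ϑ) (hlam : 0 < lam) (ht : 0 < t)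
    (hs : 0 ≤ s) (hst : s ≤ t) :
    min ((lam * (t - s)) ^ (-ϑ)) 1 * s ^ (-γ) ≤
      min ((lam * (t / 2)) ^ (-ϑ)) 1 * s ^ (-γ) +
        (2 ^ γ + 1) * t ^ (-γ) * min ((lam * (t - s)) ^ (-ϑ)) 1 := by
  have hK : 0 ≤ min ((lam * (t - s)) ^ (-ϑ)) 1 :=
    le_min (rpow_nonneg (mul_nonneg hlam.le (by linarith)) _) zero_le_one
  have hsγ : 0 ≤ s ^ (-γ) := rpow_nonneg hs _
  rcases le_or_gt s (t / 2) with hs2 | hs2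
  · have hmono : min ((lam * (t - s)) ^ (-ϑ)) 1 ≤ min ((lam * (t / 2)) ^ (-ϑ)) 1 :=
      min_le_min_right _ (rpow_le_rpow_of_nonpos (by positivity)
        (mul_le_mul_of_nonneg_left (by linarith) hlam.le) (by linarith))
    have hM : 0 ≤ (2 ^ γ + 1) * t ^ (-γ) := by positivity
    nlinarith [mul_le_mul_of_nonneg_right hmono hsγ, mul_nonneg hM hK]
  · have hpow := rpow_neg_le_of_half_le (γ := γ) hs2.le hst (by linarith)
    have hA : 0 ≤ min ((lam * (t / 2)) ^ (-ϑ)) 1 :=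
      le_min (rpow_nonneg (by positivity) _) zero_le_one
    nlinarith

lemma intervalIntegrable_min_rpow_neg_mul_rpow_neg {ϑ γ lam t : ℝ} (hγ : γ < 1) (hlam : 0 < lam)
    (ht : 0 ≤ t) :
    IntervalIntegrable (fun s => min ((lam * (t - s)) ^ (-ϑ)) 1 * s ^ (-γ)) volume 0 t := by
  have hmeas : Measurable fun s => min ((lam * (t - s)) ^ (-ϑ)) 1 * s ^ (-γ) := by fun_prop
  refine (intervalIntegrable_rpow' (by linarith : -1 < -γ)).mono_fun'
    hmeas.aestronglyMeasurable ?_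
  rw [uIoc_of_le ht]
  filter_upwards [ae_restrict_mem measurableSet_Ioc] with s hs
  have hsγ : 0 ≤ s ^ (-γ) := rpow_nonneg hs.1.le _
  rw [norm_mul, norm_of_nonneg hsγ, norm_of_nonneg
    (le_min (rpow_nonneg (mul_nonneg hlam.le (by linarith [hs.2])) _) zero_le_one)]
  exact mul_le_of_le_one_left hsγ (min_le_right _ _)

lemma integral_min_rpow_neg_mul_rpow_neg_le {ϑ γ lam t : ℝ} (hϑ : 0 ≤ ϑ) (hγ : γ < 1)
    (hlam : 0 < lam) (ht : 0 < t) :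
    ∫ s in (0 : ℝ)..t, min ((lam * (t - s)) ^ (-ϑ)) 1 * s ^ (-γ) ≤
      (2 ^ ϑ / (1 - γ) + (2 ^ γ + 1) * (1 + |1 - ϑ|⁻¹)) * ell ϑ (lam * t) * t ^ (1 - γ) := by
  set A := min ((lam * (t / 2)) ^ (-ϑ)) 1
  set M : ℝ := 2 ^ γ + 1
  set C₀ := 1 + |1 - ϑ|⁻¹
  have hK : IntervalIntegrable (fun s => min ((lam * (t - s)) ^ (-ϑ)) 1) volume 0 t :=
    intervalIntegrable_min_rpow_neg_comp (by fun_prop) ht.le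
      fun s hs => mul_nonneg hlam.le (by linarith [hs.2])
  have hpow : IntervalIntegrable (fun s : ℝ => s ^ (-γ)) volume 0 t :=
    intervalIntegrable_rpow' (by linarith)
  have hA : A ≤ 2 ^ ϑ * ell ϑ (lam * t) :=
    calc A ≤ 2 ^ ϑ * min ((lam * t) ^ (-ϑ)) 1 := by
          simpa only [mul_div_assoc] using
            min_rpow_neg_div_le hϑ one_le_two (mul_pos hlam ht).le
      _ ≤ 2 ^ ϑ * ell ϑ (lam * t) :=
          mul_le_mul_of_nonneg_left (min_rpow_neg_le_ell _ _) (by positivity)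
  have hreflect : ∫ s in (0 : ℝ)..t, min ((lam * (t - s)) ^ (-ϑ)) 1 =
      ∫ u in (0 : ℝ)..t, min ((lam * u) ^ (-ϑ)) 1 := by
    simpa using integral_comp_sub_left (a := 0) (b := t) (fun u => min ((lam * u) ^ (-ϑ)) 1) t
  have hpow_int : ∫ s in (0 : ℝ)..t, s ^ (-γ) = t ^ (1 - γ) / (1 - γ) := by
    rw [integral_rpow (Or.inl (by linarith)), show -γ + 1 = 1 - γ by ring,
      zero_rpow (by linarith), sub_zero]
  have htt : t ^ (-γ) * t = t ^ (1 - γ) := by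
    rw [sub_eq_neg_add, rpow_add ht, rpow_one]
  calc ∫ s in (0 : ℝ)..t, min ((lam * (t - s)) ^ (-ϑ)) 1 * s ^ (-γ)
      ≤ ∫ s in (0 : ℝ)..t, (A * s ^ (-γ) + M * t ^ (-γ) * min ((lam * (t - s)) ^ (-ϑ)) 1) :=
        integral_mono_on ht.le (intervalIntegrable_min_rpow_neg_mul_rpow_neg hγ hlam ht.le)
          ((hpow.const_mul A).add (hK.const_mul _))
          fun s hs => min_rpow_neg_mul_rpow_neg_le hϑ hlam ht hs.1 hs.2
    _ = A * (t ^ (1 - γ) / (1 - γ)) +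
          M * t ^ (-γ) * ∫ u in (0 : ℝ)..t, min ((lam * u) ^ (-ϑ)) 1 := by
        rw [integral_add (hpow.const_mul A) (hK.const_mul _), intervalIntegral.integral_const_mul,
          intervalIntegral.integral_const_mul, hpow_int, hreflect]
    _ ≤ 2 ^ ϑ * ell ϑ (lam * t) * (t ^ (1 - γ) / (1 - γ)) +
          M * t ^ (-γ) * (C₀ * (t * ell ϑ (lam * t))) := by
        gcongr
        exact integral_min_mul_rpow_neg_le hϑ hlam ht.le
    _ = (2 ^ ϑ / (1 - γ) + M * C₀) * ell ϑ (lam * t) * t ^ (1 - γ) := by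
        rw [← htt]; field_simp

lemma setLIntegral_Ioo_ofReal_eq_intervalIntegral {f : ℝ → ℝ} {a b : ℝ} (hab : a ≤ b)
    (hf : IntervalIntegrable f volume a b) (hf0 : ∀ x ∈ Ioo a b, 0 ≤ f x) :
    ∫⁻ x in Ioo a b, ENNReal.ofReal (f x) = ENNReal.ofReal (∫ x in a..b, f x) := by
  rw [integral_of_le hab, integral_Ioc_eq_integral_Ioo,
    ofReal_integral_eq_lintegral_ofReal (hf.1.mono_set Ioo_subset_Ioc_self)
      ((ae_restrict_iff' measurableSet_Ioo).2 (ae_of_all _ hf0))]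

/-- for `ϑ ≥ 0` and `γ < 1` there is `C > 0` such that for all `λ, t > 0`,
`∫₀^t min((λ(t-s))^{-ϑ},1) s^{-γ} ds ≤ C ℓ_ϑ(λt) t^{1-γ}`. -/
theorem stmt_3 (ϑ γ : ℝ) (hϑ : 0 ≤ ϑ) (hγ : γ < 1) :
    ∃ C : ℝ, 0 < C ∧ ∀ lam t : ℝ, 0 < lam → 0 < t →
      (∫⁻ s in Set.Ioo (0 : ℝ) t,
        ENNReal.ofReal (min ((lam * (t - s)) ^ (-ϑ)) 1 * s ^ (-γ))) ≤
      ENNReal.ofReal (C * ell ϑ (lam * t) * t ^ (1 - γ)) := by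
  refine ⟨2 ^ ϑ / (1 - γ) + (2 ^ γ + 1) * (1 + |1 - ϑ|⁻¹),
    add_pos (div_pos (by positivity) (by linarith)) (by positivity), fun lam t hlam ht => ?_⟩
  rw [setLIntegral_Ioo_ofReal_eq_intervalIntegral ht.le
    (intervalIntegrable_min_rpow_neg_mul_rpow_neg hγ hlam ht.le) fun s hs =>
      mul_nonneg (le_min (rpow_nonneg (mul_nonneg hlam.le (by linarith [hs.2])) _) zero_le_one)
        (rpow_nonneg hs.1.le _)]
  exact ENNReal.ofReal_le_ofReal (integral_min_rpow_neg_mul_rpow_neg_le hϑ hγ hlam ht)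
end

section
/- Fix α ∈ (0,2], an integer d ≥ 1, integers j, ℓ ≥ 1 and t > 0 with ℓ ∉ Θ^t_j. Let f, g : ℝ^{2d} → ℂ be Schwartz functions such that the Fourier transform of f is supported in the anisotropic annulus {ξ ∈ ℝ^{2d} : 2^{j−1} ≤ |ξ|_a ≤ 2^{j+1}} and the Fourier transform of g is supported in {ξ ∈ ℝ^{2d} : 2^{ℓ−1} ≤ |ξ|_a ≤ 2^{ℓ+1}}. Then ∫_{ℝ^{2d}} f(x,v) · g(x − tv, v) dx dv = 0. -/
/-!
By Parseval, `∫ f · (g ∘ T) = ∫ f̂(-ξ) · (g ∘ T)^(ξ) dξ` up to the normalisation of the Fourier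
transform, where `T (x, v) = (x - t v, v)` is the free transport, and
`(g ∘ T)^(ξ₁, ξ₂) = ĝ(ξ₁, ξ₂ + t ξ₁)`. The frequencies `ξ` and `(ξ₁, ξ₂ + t ξ₁)` share their first
component, so their anisotropic norms differ by at most `t |ξ₁| ≤ t 2^{(j+1)(1+α)}`. Hence if both
lie in the annuli of `f̂` and `ĝ`, then `ℓ ∈ Θ^t_j`; as `ℓ ∉ Θ^t_j`, the integrand vanishes.
-/

open MeasureTheory

/-- The Fourier transform of a function on `ℝ^d × ℝ^d` (phase space), with the
standard convention `f̂(ξ) = ∫ e^{-i z·ξ} f(z) dz`. -/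
noncomputable def fourier2 {d : ℕ}
    (f : EuclideanSpace ℝ (Fin d) × EuclideanSpace ℝ (Fin d) → ℂ)
    (ξ : EuclideanSpace ℝ (Fin d) × EuclideanSpace ℝ (Fin d)) : ℂ :=
  ∫ z : EuclideanSpace ℝ (Fin d) × EuclideanSpace ℝ (Fin d),
    Complex.exp (-(Complex.I *
      ((((inner ℝ z.1 ξ.1 : ℝ) + (inner ℝ z.2 ξ.2 : ℝ) : ℝ) : ℂ)))) * f z

/-- The anisotropic quasi-norm `|ξ|_a = |ξ₁|^{1/(1+α)} + |ξ₂|` on `ℝ^d × ℝ^d`. -/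
noncomputable def anorm (α : ℝ) {d : ℕ}
    (ξ : EuclideanSpace ℝ (Fin d) × EuclideanSpace ℝ (Fin d)) : ℝ :=
  ‖ξ.1‖ ^ (1 / (1 + α)) + ‖ξ.2‖

open WithLp
open scoped FourierTransform Real

theorem SchwartzMap.integral_mul_eq_integral_fourier_neg_mul_fourier
    {V : Type*} [NormedAddCommGroup V] [InnerProductSpace ℝ V] [FiniteDimensional ℝ V]
    [MeasurableSpace V] [BorelSpace V] (f h : SchwartzMap V ℂ) :
    ∫ x, f x * h x = ∫ ξ, 𝓕 (⇑f) (-ξ) * 𝓕 (⇑h) ξ :=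
  calc ∫ x, f x * h x = ∫ x, 𝓕 (𝓕⁻ f) x * h x := by rw [FourierTransform.fourier_fourierInv_eq]
    _ = ∫ ξ, 𝓕⁻ f ξ * 𝓕 h ξ := SchwartzMap.integral_fourier_mul_eq _ _
    _ = ∫ ξ, 𝓕 (⇑f) (-ξ) * 𝓕 (⇑h) ξ := by
      simp only [SchwartzMap.fourierInv_coe, Real.fourierInv_eq_fourier_neg,
        SchwartzMap.fourier_coe]

theorem MeasureTheory.measurePreserving_prod_sub_comp_snd {E F : Type*} [AddGroup E]
    [MeasurableSpace E] [MeasurableAdd₂ E] [MeasurableNeg E] [MeasurableSpace F]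
    (μ : Measure E) [μ.IsAddRightInvariant] [SFinite μ] (ν : Measure F) [SFinite ν]
    {φ : F → E} (hφ : Measurable φ) :
    MeasurePreserving (fun p : E × F => (p.1 - φ p.2, p.2)) (μ.prod ν) (μ.prod ν) := by
  have skew : MeasurePreserving (fun p : F × E => (p.1, p.2 - φ p.1)) (ν.prod μ) (ν.prod μ) := by
    simpa only [id, sub_eq_add_neg] using (MeasurePreserving.id ν).skew_product
      (measurable_snd.add (hφ.comp measurable_fst).neg)
      (ae_of_all _ fun v => map_add_right_eq_self μ (-φ v))
  exact (Measure.measurePreserving_swap.comp skew).comp Measure.measurePreserving_swap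

section FreeTransport

variable {E : Type*} [NormedAddCommGroup E] [NormedSpace ℝ E]

def freeTransport (t : ℝ) : (E × E) ≃L[ℝ] (E × E) :=
  ContinuousLinearEquiv.equivOfInverse
    ((ContinuousLinearMap.fst ℝ E E - t • ContinuousLinearMap.snd ℝ E E).prod
      (ContinuousLinearMap.snd ℝ E E))
    ((ContinuousLinearMap.fst ℝ E E + t • ContinuousLinearMap.snd ℝ E E).prod
      (ContinuousLinearMap.snd ℝ E E))
    (fun z => by simp) (fun z => by simp)

@[simp]
theorem freeTransport_apply (t : ℝ) (z : E × E) : freeTransport t z = (z.1 - t • z.2, z.2) :=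
  rfl

theorem measurePreserving_freeTransport [MeasurableSpace E] [BorelSpace E]
    [SecondCountableTopology E] (μ : Measure E) [μ.IsAddRightInvariant] [SFinite μ] (t : ℝ) :
    MeasurePreserving (freeTransport t) (μ.prod μ) (μ.prod μ) :=
  measurePreserving_prod_sub_comp_snd μ μ (measurable_const_smul t)

end FreeTransport

abbrev PhaseSpace (d : ℕ) := EuclideanSpace ℝ (Fin d) × EuclideanSpace ℝ (Fin d)

namespace PhaseSpace

variable {d : ℕ}

/- `PhaseSpace d` carries the sup norm; its Euclidean copy `WithLp 2 (PhaseSpace d)` has the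
inner product `⟪z₁, ξ₁⟫ + ⟪z₂, ξ₂⟫`, for which Mathlib's `𝓕` is `fourier2` up to the factor `2π`. -/
theorem fourier_comp_ofLp_eq_fourier2 (φ : PhaseSpace d → ℂ) (η : PhaseSpace d) :
    𝓕 (φ ∘ ofLp : WithLp 2 (PhaseSpace d) → ℂ) (toLp 2 η) = fourier2 φ ((2 * π) • η) := by
  rw [Real.fourier_eq, fourier2, ← (volume_preserving_toLp _ _).integral_comp
    (MeasurableEquiv.toLp 2 _).measurableEmbedding]
  congr 1 with z
  simp only [Function.comp_apply, prod_inner_apply, Circle.smul_def, Real.fourierChar_apply,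
    Prod.smul_fst, Prod.smul_snd, inner_smul_right, smul_eq_mul]
  congr 2
  push_cast
  ring

theorem fourier2_comp_freeTransport (φ : PhaseSpace d → ℂ) (t : ℝ) (ξ : PhaseSpace d) :
    fourier2 (φ ∘ freeTransport t) ξ = fourier2 φ (ξ.1, ξ.2 + t • ξ.1) := by
  have hT : MeasurePreserving (freeTransport t) (volume : Measure (PhaseSpace d)) volume :=
    measurePreserving_freeTransport volume t
  rw [fourier2, fourier2]
  conv_rhs => rw [← hT.integral_comp (freeTransport t).toHomeomorph.measurableEmbedding]
  congr 1 with z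
  simp only [Function.comp_apply, freeTransport_apply, inner_sub_left, inner_add_right,
    real_inner_smul_left, real_inner_smul_right]
  congr 5
  ring

theorem integral_mul_eq_zero_of_fourier2_neg_mul_fourier2_eq_zero
    (f h : SchwartzMap (PhaseSpace d) ℂ) (hfh : ∀ ξ, fourier2 f (-ξ) * fourier2 h ξ = 0) :
    ∫ z, f z * h z = 0 := by
  let L := WithLp.prodContinuousLinearEquiv 2 ℝ (EuclideanSpace ℝ (Fin d))
    (EuclideanSpace ℝ (Fin d))
  let F := SchwartzMap.compCLMOfContinuousLinearEquiv ℝ L f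
  let H := SchwartzMap.compCLMOfContinuousLinearEquiv ℝ L h
  calc ∫ z, f z * h z = ∫ w, F w * H w :=
        ((volume_preserving_ofLp _ _).integral_comp
          (MeasurableEquiv.toLp 2 _).symm.measurableEmbedding (fun z => f z * h z)).symm
    _ = ∫ ξ, 𝓕 (⇑F) (-ξ) * 𝓕 (⇑H) ξ := F.integral_mul_eq_integral_fourier_neg_mul_fourier H
    _ = 0 := by
      refine integral_eq_zero_of_ae (ae_of_all _ fun ξ => ?_)
      have hF : 𝓕 (⇑F) (-ξ) = fourier2 f (-((2 * π) • ofLp ξ)) := by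
        rw [← smul_neg, ← ofLp_neg (p := 2), ← fourier_comp_ofLp_eq_fourier2, toLp_ofLp]
        rfl
      have hH : 𝓕 (⇑H) ξ = fourier2 h ((2 * π) • ofLp ξ) := by
        rw [← fourier_comp_ofLp_eq_fourier2, toLp_ofLp]
        rfl
      show _ * _ = (0 : ℂ)
      rw [hF, hH]
      exact hfh _

theorem anorm_neg (α : ℝ) (ξ : PhaseSpace d) : anorm α (-ξ) = anorm α ξ := by
  simp only [anorm, Prod.fst_neg, Prod.snd_neg, norm_neg]

theorem norm_fst_le_of_anorm_le {α s : ℝ} (hα : 0 ≤ α) {ξ : PhaseSpace d}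
    (h : anorm α ξ ≤ 2 ^ s) : ‖ξ.1‖ ≤ 2 ^ (s * (1 + α)) := by
  have h1 : ‖ξ.1‖ ^ (1 + α)⁻¹ ≤ 2 ^ s := by
    rw [← one_div]
    exact (le_add_of_nonneg_right (norm_nonneg _)).trans h
  rw [Real.rpow_mul zero_le_two]
  exact (Real.rpow_inv_le_iff_of_pos (norm_nonneg _) (by positivity) (by linarith)).1 h1

theorem two_rpow_le_of_anorm_le_of_le_anorm {α t r s : ℝ} (hα : 0 ≤ α) (ht : 0 ≤ t)
    {ξ η : PhaseSpace d} (h1 : η.1 = ξ.1) (h2 : ‖η.2‖ ≤ ‖ξ.2‖ + t * ‖ξ.1‖)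
    (hξ : anorm α ξ ≤ 2 ^ (s + 1)) (hη : 2 ^ (r - 1) ≤ anorm α η) :
    (2 : ℝ) ^ r ≤ 2 ^ (α + 2) * (2 ^ s + t * 2 ^ (s * (1 + α))) := by
  have hηξ : anorm α η ≤ anorm α ξ + t * ‖ξ.1‖ := by
    simp only [anorm, h1]
    linarith
  have hx := mul_le_mul_of_nonneg_left (norm_fst_le_of_anorm_le hα hξ) ht
  have hα1 : (1 : ℝ) ≤ 2 ^ α := Real.one_le_rpow one_le_two hα
  have hs : (0 : ℝ) ≤ 2 ^ s := by positivity
  have e : (2 : ℝ) ^ ((s + 1) * (1 + α)) = 2 ^ (s * (1 + α)) * 2 * 2 ^ α := by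
    rw [show (s + 1) * (1 + α) = s * (1 + α) + 1 + α by ring, Real.rpow_add two_pos,
      Real.rpow_add_one two_ne_zero]
  rw [Real.rpow_add_one two_ne_zero] at hξ
  rw [Real.rpow_sub_one two_ne_zero] at hη
  rw [e] at hx
  rw [Real.rpow_add two_pos, show (2 : ℝ) ^ (2 : ℝ) = 4 by norm_num]
  nlinarith [mul_le_mul_of_nonneg_right hα1 hs]

end PhaseSpace

open PhaseSpace in
theorem stmt_4_general (α : ℝ) (hα : α ∈ Set.Ioc (0 : ℝ) 2) (d : ℕ)
    (j ℓ : ℕ) (t : ℝ) (ht : 0 < t)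
    (hnot : ¬ (((2 : ℝ) ^ (ℓ : ℝ) ≤
        (2 : ℝ) ^ (α + 2) * ((2 : ℝ) ^ (j : ℝ) + t * (2 : ℝ) ^ ((j : ℝ) * (1 + α)))) ∧
      ((2 : ℝ) ^ (j : ℝ) ≤
        (2 : ℝ) ^ (α + 2) * ((2 : ℝ) ^ (ℓ : ℝ) + t * (2 : ℝ) ^ ((ℓ : ℝ) * (1 + α))))))
    (f g : SchwartzMap (EuclideanSpace ℝ (Fin d) × EuclideanSpace ℝ (Fin d)) ℂ)
    (hf : Function.support (fourier2 ⇑f) ⊆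
      {ξ | (2 : ℝ) ^ ((j : ℝ) - 1) ≤ anorm α ξ ∧ anorm α ξ ≤ (2 : ℝ) ^ ((j : ℝ) + 1)})
    (hg : Function.support (fourier2 ⇑g) ⊆
      {ξ | (2 : ℝ) ^ ((ℓ : ℝ) - 1) ≤ anorm α ξ ∧ anorm α ξ ≤ (2 : ℝ) ^ ((ℓ : ℝ) + 1)}) :
    (∫ z : EuclideanSpace ℝ (Fin d) × EuclideanSpace ℝ (Fin d),
      f z * g (z.1 - t • z.2, z.2)) = 0 := by
  refine integral_mul_eq_zero_of_fourier2_neg_mul_fourier2_eq_zero f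
    (SchwartzMap.compCLMOfContinuousLinearEquiv ℝ (freeTransport t) g) fun ξ => ?_
  by_contra hne
  obtain ⟨hfξ, hgξ⟩ := mul_ne_zero_iff.1 hne
  set η : PhaseSpace d := (ξ.1, ξ.2 + t • ξ.1)
  obtain ⟨hf₁, hf₂⟩ := hf hfξ
  obtain ⟨hg₁, hg₂⟩ := hg (fourier2_comp_freeTransport g t ξ ▸ hgξ)
  rw [anorm_neg] at hf₁ hf₂
  have hηξ : ‖η.2‖ ≤ ‖ξ.2‖ + t * ‖ξ.1‖ := by
    simpa [norm_smul, abs_of_pos ht] using norm_add_le ξ.2 (t • ξ.1)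
  have hξη : ‖ξ.2‖ ≤ ‖η.2‖ + t * ‖η.1‖ := by
    simpa [norm_smul, abs_of_pos ht] using norm_sub_le (ξ.2 + t • ξ.1) (t • ξ.1)
  exact hnot
    ⟨two_rpow_le_of_anorm_le_of_le_anorm (ξ := ξ) (η := η) hα.1.le ht.le rfl hηξ hf₂ hg₁,
      two_rpow_le_of_anorm_le_of_le_anorm (ξ := η) (η := ξ) hα.1.le ht.le rfl hξη hg₂ hf₁⟩

/-- if `ℓ ∉ Θ^t_j` and the Fourier transforms of the Schwartz functions
`f` and `g` are supported in the anisotropic annuli of radii `2^{j±1}` and `2^{ℓ±1}`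
respectively, then `∫ f(x,v) g(x - tv, v) dx dv = 0`. -/
theorem stmt_4 (α : ℝ) (hα : α ∈ Set.Ioc (0 : ℝ) 2) (d : ℕ) (hd : 1 ≤ d)
    (j ℓ : ℕ) (hj : 1 ≤ j) (hℓ : 1 ≤ ℓ) (t : ℝ) (ht : 0 < t)
    (hnot : ¬ (((2 : ℝ) ^ (ℓ : ℝ) ≤
        (2 : ℝ) ^ (α + 2) * ((2 : ℝ) ^ (j : ℝ) + t * (2 : ℝ) ^ ((j : ℝ) * (1 + α)))) ∧
      ((2 : ℝ) ^ (j : ℝ) ≤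
        (2 : ℝ) ^ (α + 2) * ((2 : ℝ) ^ (ℓ : ℝ) + t * (2 : ℝ) ^ ((ℓ : ℝ) * (1 + α))))))
    (f g : SchwartzMap (EuclideanSpace ℝ (Fin d) × EuclideanSpace ℝ (Fin d)) ℂ)
    (hf : Function.support (fourier2 ⇑f) ⊆
      {ξ | (2 : ℝ) ^ ((j : ℝ) - 1) ≤ anorm α ξ ∧ anorm α ξ ≤ (2 : ℝ) ^ ((j : ℝ) + 1)})
    (hg : Function.support (fourier2 ⇑g) ⊆
      {ξ | (2 : ℝ) ^ ((ℓ : ℝ) - 1) ≤ anorm α ξ ∧ anorm α ξ ≤ (2 : ℝ) ^ ((ℓ : ℝ) + 1)}) :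
    (∫ z : EuclideanSpace ℝ (Fin d) × EuclideanSpace ℝ (Fin d),
      f z * g (z.1 - t • z.2, z.2)) = 0 :=
  stmt_4_general α hα d j ℓ t ht hnot f g hf hg
end

section
/- Fix α ∈ (0,2] and β ∈ ℝ with β ≠ 0. Then there exists a constant C = C(α, β) > 0 such that for every t > 0 and every integer j ≥ 1, Σ_{ℓ ∈ Θ^t_j} 2^{−ℓβ} ≤ C · 2^{−jβ} · (1 + t·2^{jα})^{|β|}. -/
/-!
With `x = 2 ^ j` and `D = 2 ^ (α + 2) (1 + t 2 ^ (j α))`, every `ℓ ∈ Θ^t_j` satisfies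
`x / D ≤ 2 ^ ℓ ≤ D x`; for the lower bound one uses that `s ↦ 1 + t 2 ^ (s α)` is increasing.
On such a dyadic window the terms `2 ^ (-ℓ β)` decay geometrically, with ratio `2 ^ (-|β|)`,
away from the endpoint where they are largest, so the sum is at most
`D ^ |β| x ^ (-β) / (1 - 2 ^ (-|β|))`.
-/

open Real Function

theorem tsum_le_of_le_geometric_of_injOn {ι : Type*} {f : ι → ℝ} (hf : 0 ≤ f) {φ : ι → ℕ}
    (hφ : (support f).InjOn φ) {c q : ℝ} (hc : 0 ≤ c) (hq0 : 0 ≤ q) (hq1 : q < 1)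
    (h : ∀ i ∈ support f, f i ≤ c * q ^ φ i) :
    ∑' i, f i ≤ c / (1 - q) := by
  have hg : Summable fun k : ℕ => c * q ^ k := (summable_geometric_of_lt_one hq0 hq1).mul_left c
  have hle : ∀ i : support f, f i ≤ c * q ^ (support f).domRestrict φ i := fun i => h i i.2
  rw [← tsum_subtype_eq_of_support_subset subset_rfl]
  calc ∑' i : support f, f i
      ≤ ∑' k : ℕ, c * q ^ k :=
        Summable.tsum_le_tsum_of_inj _ hφ.injective (fun _ _ => by positivity) hle
          ((hg.comp_injective hφ.injective).of_nonneg_of_le (fun i => hf i) hle) hg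
    _ = c / (1 - q) := by rw [tsum_mul_left, tsum_geometric_of_lt_one hq0 hq1, div_eq_mul_inv]

theorem two_rpow_neg_mul_eq {ℓ N β γ : ℝ} {k : ℕ} (h : ℓ * β = N * β + k * γ) :
    (2 : ℝ) ^ (-ℓ * β) = ((2 : ℝ) ^ N) ^ (-β) * ((2 : ℝ) ^ (-γ)) ^ k := by
  rw [← rpow_natCast, ← rpow_mul zero_le_two, ← rpow_mul zero_le_two, ← rpow_add two_pos]
  congr 1
  linarith

section DyadicSums

variable {p : ℕ → Prop} [DecidablePred p] {β : ℝ}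

theorem tsum_ite_two_rpow_le_of_two_rpow_le {z : ℝ} (hβ : β < 0) (hz : 0 < z)
    (hp : ∀ ℓ, p ℓ → (2 : ℝ) ^ (ℓ : ℝ) ≤ z) :
    ∑' ℓ : ℕ, (if p ℓ then (2 : ℝ) ^ (-(ℓ : ℝ) * β) else 0) ≤ z ^ (-β) / (1 - (2 : ℝ) ^ β) := by
  set f : ℕ → ℝ := fun ℓ => if p ℓ then (2 : ℝ) ^ (-(ℓ : ℝ) * β) else 0
  have hsupp : support f ⊆ {ℓ | p ℓ} := fun ℓ hℓ => by_contra fun hn => hℓ (if_neg hn)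
  have hlog : ∀ ℓ, p ℓ → (ℓ : ℝ) ≤ logb 2 z := fun ℓ hℓ =>
    (le_logb_iff_rpow_le one_lt_two hz).mpr (hp ℓ hℓ)
  set N := ⌊logb 2 z⌋₊
  have hle : ∀ ℓ, p ℓ → ℓ ≤ N := fun ℓ hℓ => Nat.le_floor (hlog ℓ hℓ)
  refine tsum_le_of_le_geometric_of_injOn (fun ℓ => by positivity) (φ := fun ℓ => N - ℓ)
    (q := 2 ^ β) ?_ (by positivity) (by positivity)
    (rpow_lt_one_of_one_lt_of_neg one_lt_two hβ) ?_
  · intro a ha b hb hab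
    have := hle a (hsupp ha); have := hle b (hsupp hb); simp only at hab; omega
  · intro ℓ hℓ
    have hpℓ : p ℓ := hsupp hℓ
    have hN : (2 : ℝ) ^ (N : ℝ) ≤ z := by
      calc (2 : ℝ) ^ (N : ℝ) ≤ 2 ^ logb 2 z :=
            rpow_le_rpow_of_exponent_le one_le_two
              (Nat.floor_le ((Nat.cast_nonneg ℓ).trans (hlog ℓ hpℓ)))
        _ = z := rpow_logb two_pos (by norm_num) hz
    rw [if_pos hpℓ, two_rpow_neg_mul_eq (N := N) (γ := -β) (k := N - ℓ)
      (by rw [Nat.cast_sub (hle ℓ hpℓ)]; ring), neg_neg]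
    gcongr
    linarith

theorem tsum_ite_two_rpow_le_of_le_two_rpow {y : ℝ} (hβ : 0 < β) (hy : 0 < y)
    (hp : ∀ ℓ, p ℓ → y ≤ (2 : ℝ) ^ (ℓ : ℝ)) :
    ∑' ℓ : ℕ, (if p ℓ then (2 : ℝ) ^ (-(ℓ : ℝ) * β) else 0) ≤ y ^ (-β) / (1 - (2 : ℝ) ^ (-β)) := by
  set f : ℕ → ℝ := fun ℓ => if p ℓ then (2 : ℝ) ^ (-(ℓ : ℝ) * β) else 0
  have hsupp : support f ⊆ {ℓ | p ℓ} := fun ℓ hℓ => by_contra fun hn => hℓ (if_neg hn)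
  set N := ⌈logb 2 y⌉₊
  have hle : ∀ ℓ, p ℓ → N ≤ ℓ := fun ℓ hℓ =>
    Nat.ceil_le.mpr <| (logb_le_iff_le_rpow one_lt_two hy).mpr (hp ℓ hℓ)
  have hN : y ≤ (2 : ℝ) ^ (N : ℝ) := by
    calc y = 2 ^ logb 2 y := (rpow_logb two_pos (by norm_num) hy).symm
      _ ≤ (2 : ℝ) ^ (N : ℝ) := rpow_le_rpow_of_exponent_le one_le_two (Nat.le_ceil _)
  refine tsum_le_of_le_geometric_of_injOn (fun ℓ => by positivity) (φ := fun ℓ => ℓ - N)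
    (q := 2 ^ (-β)) ?_ (by positivity) (by positivity)
    (rpow_lt_one_of_one_lt_of_neg one_lt_two (neg_neg_of_pos hβ)) ?_
  · intro a ha b hb hab
    have := hle a (hsupp ha); have := hle b (hsupp hb); simp only at hab; omega
  · intro ℓ hℓ
    have hpℓ : p ℓ := hsupp hℓ
    rw [if_pos hpℓ, two_rpow_neg_mul_eq (N := N) (γ := β) (k := ℓ - N)
      (by rw [Nat.cast_sub (hle ℓ hpℓ)]; ring)]
    exact mul_le_mul_of_nonneg_right (rpow_le_rpow_of_nonpos hy hN (by linarith)) (by positivity)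

theorem tsum_ite_two_rpow_le_of_window {x D : ℝ} (hx : 0 < x) (hD : 0 < D) (hβ : β ≠ 0)
    (hp : ∀ ℓ, p ℓ → (2 : ℝ) ^ (ℓ : ℝ) ≤ D * x ∧ x ≤ D * (2 : ℝ) ^ (ℓ : ℝ)) :
    ∑' ℓ : ℕ, (if p ℓ then (2 : ℝ) ^ (-(ℓ : ℝ) * β) else 0)
      ≤ D ^ |β| * x ^ (-β) / (1 - (2 : ℝ) ^ (-|β|)) := by
  rcases hβ.lt_or_gt with hneg | hpos
  · rw [abs_of_neg hneg, neg_neg, ← mul_rpow hD.le hx.le]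
    exact tsum_ite_two_rpow_le_of_two_rpow_le hneg (by positivity) fun ℓ hℓ => (hp ℓ hℓ).1
  · have hdiv : (x / D) ^ (-β) = D ^ β * x ^ (-β) := by
      rw [div_rpow hx.le hD.le, rpow_neg hD.le, div_inv_eq_mul, mul_comm]
    rw [abs_of_pos hpos, ← hdiv]
    exact tsum_ite_two_rpow_le_of_le_two_rpow hpos (by positivity)
      fun ℓ hℓ => (div_le_iff₀' hD).mpr (hp ℓ hℓ).2

end DyadicSums

theorem two_rpow_add_mul_two_rpow_eq (t α s : ℝ) :
    (2 : ℝ) ^ s + t * (2 : ℝ) ^ (s * (1 + α)) = (1 + t * (2 : ℝ) ^ (s * α)) * (2 : ℝ) ^ s := by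
  rw [show s * (1 + α) = s + s * α by ring, rpow_add two_pos]
  ring

theorem two_rpow_le_mul_two_rpow_of_le {α t K s u : ℝ} (hα : 0 ≤ α) (ht : 0 ≤ t) (hK : 1 ≤ K)
    (h : (2 : ℝ) ^ s ≤ K * ((1 + t * (2 : ℝ) ^ (u * α)) * (2 : ℝ) ^ u)) :
    (2 : ℝ) ^ s ≤ K * (1 + t * (2 : ℝ) ^ (s * α)) * (2 : ℝ) ^ u := by
  rcases le_total u s with hus | hsu
  · calc (2 : ℝ) ^ s ≤ K * ((1 + t * (2 : ℝ) ^ (u * α)) * (2 : ℝ) ^ u) := h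
      _ ≤ K * (1 + t * (2 : ℝ) ^ (s * α)) * (2 : ℝ) ^ u := by
        rw [← mul_assoc]
        gcongr
        exact one_le_two
  · calc (2 : ℝ) ^ s ≤ 1 * 1 * (2 : ℝ) ^ u := by
          rw [one_mul, one_mul]; exact rpow_le_rpow_of_exponent_le one_le_two hsu
      _ ≤ K * (1 + t * (2 : ℝ) ^ (s * α)) * (2 : ℝ) ^ u := by
        gcongr
        exact le_add_of_nonneg_right (by positivity)

/-- for `α ∈ (0,2]` and `β ≠ 0` there is `C > 0` such that for every `t > 0`
and every integer `j ≥ 1`, `∑_{ℓ ∈ Θ^t_j} 2^{-ℓβ} ≤ C 2^{-jβ} (1 + t 2^{jα})^{|β|}`. -/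
theorem stmt_5 (α β : ℝ) (hα : α ∈ Set.Ioc (0 : ℝ) 2) (hβ : β ≠ 0) :
    ∃ C : ℝ, 0 < C ∧ ∀ t : ℝ, 0 < t → ∀ j : ℕ, 1 ≤ j →
      (∑' ℓ : ℕ,
        if ((2 : ℝ) ^ (ℓ : ℝ) ≤
              (2 : ℝ) ^ (α + 2) * ((2 : ℝ) ^ (j : ℝ) + t * (2 : ℝ) ^ ((j : ℝ) * (1 + α)))) ∧
           ((2 : ℝ) ^ (j : ℝ) ≤
              (2 : ℝ) ^ (α + 2) * ((2 : ℝ) ^ (ℓ : ℝ) + t * (2 : ℝ) ^ ((ℓ : ℝ) * (1 + α))))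
        then (2 : ℝ) ^ (-(ℓ : ℝ) * β) else 0) ≤
      C * (2 : ℝ) ^ (-(j : ℝ) * β) * (1 + t * (2 : ℝ) ^ ((j : ℝ) * α)) ^ |β| := by
  set K : ℝ := (2 : ℝ) ^ (α + 2)
  have hK : 1 ≤ K := one_le_rpow one_le_two (by linarith [hα.1])
  have hq1 : (2 : ℝ) ^ (-|β|) < 1 :=
    rpow_lt_one_of_one_lt_of_neg one_lt_two (neg_neg_of_pos (abs_pos.mpr hβ))
  refine ⟨K ^ |β| / (1 - (2 : ℝ) ^ (-|β|)), div_pos (by positivity) (by linarith), ?_⟩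
  intro t ht j _
  set M : ℝ := 1 + t * (2 : ℝ) ^ ((j : ℝ) * α)
  refine (tsum_ite_two_rpow_le_of_window (D := K * M) (x := (2 : ℝ) ^ (j : ℝ)) (by positivity)
    (by positivity) hβ fun ℓ hℓ => ?_).trans_eq ?_
  · simp only [two_rpow_add_mul_two_rpow_eq] at hℓ
    exact ⟨by simpa only [M, mul_assoc] using hℓ.1,
      two_rpow_le_mul_two_rpow_of_le hα.1.le ht.le hK hℓ.2⟩
  · rw [mul_rpow (by positivity) (by positivity), ← rpow_mul zero_le_two (j : ℝ), neg_mul,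
      mul_neg, mul_comm (j : ℝ)]
    ring
end

section
/- Let α > 0, q ∈ [1,∞], E a normed space and f : (0,∞) → E strongly measurable. Then for all pairs γ = (γ₀, γ₁) and γ' = (γ₀', γ₁') in [0,∞)² and all t > 0, ‖f(t + ·)‖_{L^q_{γ'}(E)} ≤ (min(t,1))^{−γ₀/α} · (max(t,1))^{−γ₁/α} · ‖f‖_{L^q_{γ+γ'}(E)}, where γ + γ' = (γ₀+γ₀', γ₁+γ₁'). -/
/-!
Write `w_γ(r) = (min r 1)^{γ₀/α} (max r 1)^{γ₁/α}`. For nonnegative exponents `w_γ` is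
nondecreasing on `[0, ∞)`, and `γ ↦ w_γ(r)` is multiplicative. Hence for `t, r > 0`,
`w_{γ'}(r) = w_{-γ}(t) w_γ(t) w_{γ'}(r) ≤ w_{-γ}(t) w_{γ+γ'}(t + r)`, a pointwise bound on the
integrand. Substituting `s = t + r` turns the right-hand side into an integral over `(t, ∞)`,
which is dominated by the integral over `(0, ∞)`.
-/

open MeasureTheory
open scoped ENNReal

/-- The time-weighted norm `‖g‖_{L^q_γ(E)}`: the `L^q`-norm on `(0,∞)` of
`r ↦ ‖g(r)‖ (min r 1)^{γ₀/α} (max r 1)^{γ₁/α}` (with the essential-supremum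
modification for `q = ∞`); the value may be `+∞`. -/
noncomputable def wnorm {E : Type*} [NormedAddCommGroup E]
    (α : ℝ) (q : ℝ≥0∞) (γ₀ γ₁ : ℝ) (g : ℝ → E) : ℝ≥0∞ :=
  eLpNorm (fun r : ℝ => ‖g r‖ * (min r 1) ^ (γ₀ / α) * (max r 1) ^ (γ₁ / α)) q
    (volume.restrict (Set.Ioi 0))

theorem eLpNorm_comp_const_add_restrict_Ioi {ε : Type*} [TopologicalSpace ε] [ContinuousENorm ε]
    (g : ℝ → ε) (p : ℝ≥0∞) (t : ℝ) :
    eLpNorm (fun r => g (t + r)) p (volume.restrict (Set.Ioi 0)) =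
      eLpNorm g p (volume.restrict (Set.Ioi t)) := by
  have hemb : MeasurableEmbedding (t + ·) := (Homeomorph.addLeft t).measurableEmbedding
  have hpre : (t + ·) ⁻¹' Set.Ioi t = Set.Ioi (0 : ℝ) := by ext; simp
  conv_rhs => rw [← map_add_left_eq_self volume t, hemb.restrict_map, hpre,
    hemb.eLpNorm_map_measure]
  rfl

theorem eLpNorm_comp_const_add_restrict_Ioi_le {ε : Type*} [TopologicalSpace ε]
    [ContinuousENorm ε] (g : ℝ → ε) (p : ℝ≥0∞) {t : ℝ} (ht : 0 ≤ t) :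
    eLpNorm (fun r => g (t + r)) p (volume.restrict (Set.Ioi 0)) ≤
      eLpNorm g p (volume.restrict (Set.Ioi 0)) := by
  rw [eLpNorm_comp_const_add_restrict_Ioi]
  exact eLpNorm_mono_measure g (Measure.restrict_mono (Set.Ioi_subset_Ioi ht) le_rfl)

noncomputable def timeWeight (α γ₀ γ₁ r : ℝ) : ℝ :=
  (min r 1) ^ (γ₀ / α) * (max r 1) ^ (γ₁ / α)

section timeWeight

variable {α γ₀ γ₁ : ℝ}

theorem wnorm_eq_eLpNorm_timeWeight {E : Type*} [NormedAddCommGroup E] (q : ℝ≥0∞)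
    (g : ℝ → E) :
    wnorm α q γ₀ γ₁ g =
      eLpNorm (fun r => ‖g r‖ * timeWeight α γ₀ γ₁ r) q (volume.restrict (Set.Ioi 0)) := by
  simp only [wnorm, timeWeight, mul_assoc]

theorem timeWeight_pos {r : ℝ} (hr : 0 < r) : 0 < timeWeight α γ₀ γ₁ r := by
  have : 0 < min r 1 := lt_min hr one_pos
  unfold timeWeight
  positivity

theorem timeWeight_mono (hα : 0 < α) (h₀ : 0 ≤ γ₀) (h₁ : 0 ≤ γ₁) {r s : ℝ} (hr : 0 ≤ r)
    (hrs : r ≤ s) : timeWeight α γ₀ γ₁ r ≤ timeWeight α γ₀ γ₁ s := by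
  unfold timeWeight
  have : 0 ≤ min s 1 := le_min (hr.trans hrs) zero_le_one
  gcongr

theorem timeWeight_add {γ₀' γ₁' r : ℝ} (hr : 0 < r) :
    timeWeight α (γ₀ + γ₀') (γ₁ + γ₁') r = timeWeight α γ₀ γ₁ r * timeWeight α γ₀' γ₁' r := by
  have hmin : 0 < min r 1 := lt_min hr one_pos
  have hmax : 0 < max r 1 := lt_max_of_lt_right one_pos
  simp only [timeWeight, add_div, Real.rpow_add hmin, Real.rpow_add hmax]
  ring

theorem timeWeight_neg_mul_self {t : ℝ} (ht : 0 < t) :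
    timeWeight α (-γ₀) (-γ₁) t * timeWeight α γ₀ γ₁ t = 1 := by
  rw [← timeWeight_add ht]
  simp [timeWeight]

theorem timeWeight_le_timeWeight_neg_mul_timeWeight_add (hα : 0 < α) (h₀ : 0 ≤ γ₀)
    (h₁ : 0 ≤ γ₁) {γ₀' γ₁' t r : ℝ} (h₀' : 0 ≤ γ₀') (h₁' : 0 ≤ γ₁') (ht : 0 < t) (hr : 0 < r) :
    timeWeight α γ₀' γ₁' r ≤
      timeWeight α (-γ₀) (-γ₁) t * timeWeight α (γ₀ + γ₀') (γ₁ + γ₁') (t + r) := by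
  calc timeWeight α γ₀' γ₁' r
      = timeWeight α (-γ₀) (-γ₁) t * timeWeight α γ₀ γ₁ t * timeWeight α γ₀' γ₁' r := by
        rw [timeWeight_neg_mul_self ht, one_mul]
    _ ≤ timeWeight α (-γ₀) (-γ₁) t * timeWeight α γ₀ γ₁ (t + r) *
          timeWeight α γ₀' γ₁' (t + r) := by
        have := (timeWeight_pos (α := α) (γ₀ := -γ₀) (γ₁ := -γ₁) ht).le
        have := (timeWeight_pos (α := α) (γ₀ := γ₀') (γ₁ := γ₁') hr).le
        have := (timeWeight_pos (α := α) (γ₀ := γ₀) (γ₁ := γ₁) (add_pos ht hr)).le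
        gcongr
        · exact timeWeight_mono hα h₀ h₁ ht.le (le_add_of_nonneg_right hr.le)
        · exact timeWeight_mono hα h₀' h₁' hr.le (le_add_of_nonneg_left ht.le)
    _ = _ := by rw [timeWeight_add (add_pos ht hr)]; ring

end timeWeight

theorem stmt_14_general {E : Type*} [NormedAddCommGroup E] (α : ℝ) (hα : 0 < α)
    (q : ℝ≥0∞) (f : ℝ → E)
    (γ₀ γ₁ γ₀' γ₁' : ℝ) (h₀ : 0 ≤ γ₀) (h₁ : 0 ≤ γ₁) (h₀' : 0 ≤ γ₀') (h₁' : 0 ≤ γ₁')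
    (t : ℝ) (ht : 0 < t) :
    wnorm α q γ₀' γ₁' (fun r => f (t + r)) ≤
      ENNReal.ofReal ((min t 1) ^ (-γ₀ / α) * (max t 1) ^ (-γ₁ / α)) *
        wnorm α q (γ₀ + γ₀') (γ₁ + γ₁') f := by
  set C := timeWeight α (-γ₀) (-γ₁) t
  set F := fun s => ‖f s‖ * timeWeight α (γ₀ + γ₀') (γ₁ + γ₁') s
  have hpointwise : ∀ᵐ r ∂volume.restrict (Set.Ioi 0),
      ‖‖f (t + r)‖ * timeWeight α γ₀' γ₁' r‖ ≤ C * F (t + r) := by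
    filter_upwards [ae_restrict_mem measurableSet_Ioi] with r (hr : 0 < r)
    have hw := timeWeight_pos (α := α) (γ₀ := γ₀') (γ₁ := γ₁') hr
    rw [Real.norm_of_nonneg (by positivity), mul_left_comm]
    exact mul_le_mul_of_nonneg_left
      (timeWeight_le_timeWeight_neg_mul_timeWeight_add hα h₀ h₁ h₀' h₁' ht hr) (norm_nonneg _)
  calc wnorm α q γ₀' γ₁' (fun r => f (t + r))
      ≤ eLpNorm (fun r => C * F (t + r)) q (volume.restrict (Set.Ioi 0)) := by
        rw [wnorm_eq_eLpNorm_timeWeight]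
        exact eLpNorm_mono_ae_real hpointwise
    _ = ENNReal.ofReal C * eLpNorm (fun r => F (t + r)) q (volume.restrict (Set.Ioi 0)) := by
        rw [show (fun r => C * F (t + r)) = C • fun r => F (t + r) from rfl,
          eLpNorm_const_smul, Real.enorm_eq_ofReal (timeWeight_pos ht).le]
    _ ≤ ENNReal.ofReal C * wnorm α q (γ₀ + γ₀') (γ₁ + γ₁') f := by
        rw [wnorm_eq_eLpNorm_timeWeight]
        gcongr
        exact eLpNorm_comp_const_add_restrict_Ioi_le F q ht.le

/-- for nonnegative weight pairs `γ = (γ₀,γ₁)` and `γ' = (γ₀',γ₁')` and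
every `t > 0`, `‖f(t+·)‖_{L^q_{γ'}} ≤ (min t 1)^{-γ₀/α} (max t 1)^{-γ₁/α} ‖f‖_{L^q_{γ+γ'}}`. -/
theorem stmt_14 {E : Type*} [NormedAddCommGroup E] (α : ℝ) (hα : 0 < α)
    (q : ℝ≥0∞) (hq : 1 ≤ q) (f : ℝ → E) (hf : StronglyMeasurable f)
    (γ₀ γ₁ γ₀' γ₁' : ℝ) (h₀ : 0 ≤ γ₀) (h₁ : 0 ≤ γ₁) (h₀' : 0 ≤ γ₀') (h₁' : 0 ≤ γ₁')
    (t : ℝ) (ht : 0 < t) :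
    wnorm α q γ₀' γ₁' (fun r => f (t + r)) ≤
      ENNReal.ofReal ((min t 1) ^ (-γ₀ / α) * (max t 1) ^ (-γ₁ / α)) *
        wnorm α q (γ₀ + γ₀') (γ₁ + γ₁') f :=
  stmt_14_general α hα q f γ₀ γ₁ γ₀' γ₁' h₀ h₁ h₀' h₁' t ht
end

section
/- Let d ≥ 1 be an integer, α ∈ (0,2), u : ℝ^d → ℝ a Schwartz function, and ψ : ℝ → ℝ twice continuously differentiable with ψ'' ≥ 0 (i.e. ψ convex). Then ∫_{ℝ^d} (Lu)(v) · ψ'(u(v)) dv ≤ 0, where (Lu)(v) := (1/2) ∫_{ℝ^d} ( u(v+w) + u(v−w) − 2u(v) ) · |w|^{−d−α} dw. -/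
/-!
Put `g = ψ' ∘ u`; since `ψ'` is monotone, `(u a - u b) (g a - g b) ≥ 0` for all `a, b`. For a fixed
`w`, translating `v` by `w` gives
`∫ (u(v+w) + u(v-w) - 2u(v)) g(v) dv = -∫ (u(v+w) - u(v)) (g(v+w) - g(v)) dv ≤ 0`.
It remains to exchange the `v`- and `w`-integrals. By the mean value theorem (twice) and the
decay of `D²u`, the `L¹` norm of the second difference of `u` in `v` is `O(min (|w|², 1))`, and
`min (|w|², 1) |w|^(-d-α)` is integrable when `0 < α < 2`, so Fubini applies.
-/

open MeasureTheory Metric Set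
open scoped SchwartzMap

def secondDiff {G : Type*} [AddGroup G] (u : G → ℝ) (w v : G) : ℝ :=
  u (v + w) + u (v - w) - 2 * u v

section Translation

variable {G : Type*} [AddGroup G] [MeasurableSpace G] [MeasurableAdd G] {μ : Measure G}
  [μ.IsAddRightInvariant] {u : G → ℝ}

theorem MeasureTheory.Integrable.secondDiff (hu : Integrable u μ) (w : G) :
    Integrable (secondDiff u w) μ :=
  ((hu.comp_add_right w).add (hu.comp_sub_right w)).sub (hu.const_mul 2)

theorem integral_abs_secondDiff_le (hu : Integrable u μ) (w : G) :
    ∫ v, |secondDiff u w v| ∂μ ≤ 4 * ∫ v, |u v| ∂μ := by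
  have hu' : Integrable (fun v => |u v|) μ := hu.abs
  have hpair : Integrable (fun v => |u (v + w)| + |u (v - w)|) μ :=
    (hu'.comp_add_right w).add (hu'.comp_sub_right w)
  calc ∫ v, |secondDiff u w v| ∂μ ≤ ∫ v, (|u (v + w)| + |u (v - w)| + 2 * |u v|) ∂μ :=
        integral_mono (hu.secondDiff w).abs (hpair.add (hu'.const_mul 2)) fun v => by
            simp only [secondDiff]
            have := abs_sub (u (v + w) + u (v - w)) (2 * u v)
            have := abs_add_le (u (v + w)) (u (v - w))
            rw [abs_mul, abs_two] at *
            linarith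
    _ = 4 * ∫ v, |u v| ∂μ := by
        rw [integral_add hpair (hu'.const_mul 2),
          integral_add (hu'.comp_add_right w) (hu'.comp_sub_right w),
          integral_add_right_eq_self (fun v => |u v|) w,
          integral_sub_right_eq_self (fun v => |u v|) w, integral_const_mul]
        ring

theorem integral_secondDiff_mul_monotone_comp_nonpos (hu : Integrable u μ) {φ : ℝ → ℝ}
    (hφ : Monotone φ) {M : ℝ} (hM : ∀ v, |φ (u v)| ≤ M) (w : G) :
    ∫ v, secondDiff u w v * φ (u v) ∂μ ≤ 0 := by
  have hφu : ∀ g : G → ℝ, Integrable g μ → Integrable (fun v => g v * φ (u v)) μ := fun g hg =>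
    hg.mul_bdd (hφ.measurable.comp_aemeasurable hu.aemeasurable).aestronglyMeasurable
      (ae_of_all _ hM)
  have hfwd : Integrable (fun v => (u (v + w) - u v) * φ (u v)) μ :=
    hφu _ ((hu.comp_add_right w).sub hu)
  have hback : Integrable (fun v => (u (v - w) - u v) * φ (u v)) μ :=
    hφu _ ((hu.comp_sub_right w).sub hu)
  have hshift : Integrable (fun v => (u v - u (v + w)) * φ (u (v + w))) μ := by
    simpa only [add_sub_cancel_right] using hback.comp_add_right w
  calc ∫ v, secondDiff u w v * φ (u v) ∂μ
      = ∫ v, (u (v + w) - u v) * φ (u v) ∂μ + ∫ v, (u (v - w) - u v) * φ (u v) ∂μ := by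
        rw [← integral_add hfwd hback]
        congr 1 with v
        simp only [secondDiff]
        ring
    _ = ∫ v, (u (v + w) - u v) * φ (u v) ∂μ + ∫ v, (u v - u (v + w)) * φ (u (v + w)) ∂μ := by
        rw [← integral_add_right_eq_self (fun v => (u (v - w) - u v) * φ (u v)) w]
        simp only [add_sub_cancel_right]
    _ = ∫ v, -((u (v + w) - u v) * (φ (u (v + w)) - φ (u v))) ∂μ := by
        rw [← integral_add hfwd hshift]
        congr 1 with v
        ring
    _ ≤ 0 := integral_nonpos fun v => neg_nonpos.mpr <| by
        rcases le_total (u v) (u (v + w)) with h | h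
        · exact mul_nonneg (sub_nonneg.mpr h) (sub_nonneg.mpr (hφ h))
        · exact mul_nonneg_of_nonpos_of_nonpos (sub_nonpos.mpr h) (sub_nonpos.mpr (hφ h))

end Translation

section Smooth

variable {E : Type*} [NormedAddCommGroup E] [NormedSpace ℝ E]

/-- Mean value theorem twice: `secondDiff f w v = D v - D (v - w)` with `D x = f (x + w) - f x`,
and `‖D' x‖ ≤ K ‖w‖` on the convex set of points within `‖w‖` of both `v` and `v - w`. -/
theorem abs_secondDiff_le_of_norm_fderiv_fderiv_le {f : E → ℝ} (hf : Differentiable ℝ f)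
    (hf' : Differentiable ℝ (fderiv ℝ f)) {v w : E} {K : ℝ}
    (hK : ∀ y ∈ closedBall v ‖w‖, ‖fderiv ℝ (fderiv ℝ f) y‖ ≤ K) :
    |secondDiff f w v| ≤ K * ‖w‖ ^ 2 := by
  set S := closedBall v ‖w‖ ∩ closedBall (v - w) ‖w‖
  have hD : ∀ x, HasFDerivAt (fun y => f (y + w) - f y) (fderiv ℝ f (x + w) - fderiv ℝ f x) x :=
    fun x => ((hasFDerivAt_comp_add_right w).mpr (hf (x + w)).hasFDerivAt).sub (hf x).hasFDerivAt
  have hD' : ∀ x ∈ S, ‖fderiv ℝ f (x + w) - fderiv ℝ f x‖ ≤ K * ‖w‖ := by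
    rintro x ⟨hxv, hxvw⟩
    have hxw : x + w ∈ closedBall v ‖w‖ := by
      rwa [mem_closedBall, dist_eq_norm, show x + w - v = x - (v - w) by abel, ← dist_eq_norm]
    simpa using (convex_closedBall v ‖w‖).norm_image_sub_le_of_norm_fderiv_le
      (fun y _ => hf'.differentiableAt) hK hxv hxw
  have hvS : v ∈ S := ⟨mem_closedBall_self (norm_nonneg w), by simp⟩
  have hvwS : v - w ∈ S := ⟨by simp, mem_closedBall_self (norm_nonneg w)⟩
  have := ((convex_closedBall v ‖w‖).inter (convex_closedBall (v - w) ‖w‖))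
    |>.norm_image_sub_le_of_norm_fderiv_le (fun x _ => (hD x).differentiableAt)
      (fun x hx => (hD x).fderiv ▸ hD' x hx) hvwS hvS
  rw [Real.norm_eq_abs, sub_sub_cancel, sub_add_cancel] at this
  calc |secondDiff f w v| = |f (v + w) - f v - (f v - f (v - w))| := by
        simp only [secondDiff]; ring_nf
    _ ≤ K * ‖w‖ * ‖w‖ := this
    _ = K * ‖w‖ ^ 2 := by ring

end Smooth

section Kernel

variable {E : Type*} [NormedAddCommGroup E] [NormedSpace ℝ E] [FiniteDimensional ℝ E]
  [MeasurableSpace E] [BorelSpace E] [Nontrivial E]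

theorem integrable_min_sq_one_mul_norm_rpow (μ : Measure E) [μ.IsAddHaarMeasure] {s : ℝ}
    (hs₁ : -(Module.finrank ℝ E : ℝ) - 2 < s) (hs₂ : s < -(Module.finrank ℝ E : ℝ)) :
    Integrable (fun w : E => min (‖w‖ ^ 2) 1 * ‖w‖ ^ s) μ := by
  set n := Module.finrank ℝ E
  have hn : 1 ≤ n := Module.finrank_pos
  have hpow : ∀ {r : ℝ}, 0 < r → r ^ (n - 1) = r ^ ((n : ℝ) - 1) := fun hr => by
    rw [← Real.rpow_natCast, Nat.cast_sub hn, Nat.cast_one]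
  rw [integrable_fun_norm_addHaar μ (f := fun r => min (r ^ 2) 1 * r ^ s),
    ← Ioc_union_Ioi_eq_Ioi zero_le_one]
  refine IntegrableOn.union ?_ ?_
  · have hint : IntegrableOn (fun r : ℝ => r ^ ((n : ℝ) + 1 + s)) (Ioc 0 1) :=
      (intervalIntegrable_iff_integrableOn_Ioc_of_le zero_le_one).mp
        (intervalIntegral.intervalIntegrable_rpow' (by linarith))
    refine hint.congr_fun (fun r ⟨hr0, hr1⟩ => ?_) measurableSet_Ioc
    rw [smul_eq_mul, min_eq_left (pow_le_one₀ hr0.le hr1), hpow hr0, ← Real.rpow_natCast r 2,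
      ← Real.rpow_add hr0, ← Real.rpow_add hr0]
    ring_nf
  · refine (integrableOn_Ioi_rpow_of_lt (a := (n : ℝ) - 1 + s) (by linarith) one_pos).congr_fun
      (fun r hr => ?_) measurableSet_Ioi
    have hr0 : (0 : ℝ) < r := one_pos.trans hr
    rw [smul_eq_mul, min_eq_right (one_le_pow₀ (le_of_lt hr)), one_mul, hpow hr0,
      ← Real.rpow_add hr0]

end Kernel

namespace SchwartzMap

variable {E : Type*} [NormedAddCommGroup E] [NormedSpace ℝ E]

theorem exists_abs_secondDiff_mul_one_add_pow_le (u : 𝓢(E, ℝ)) (k : ℕ) :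
    ∃ C, ∀ v w : E, ‖w‖ ≤ 1 → |secondDiff u w v| * (1 + ‖v‖) ^ k ≤ C * ‖w‖ ^ 2 := by
  set C₀ := 2 ^ k * (Finset.Iic (k, 2)).sup (fun m => SchwartzMap.seminorm ℝ m.1 m.2) u
  have hdecay : ∀ y, (1 + ‖y‖) ^ k * ‖fderiv ℝ (fderiv ℝ u) y‖ ≤ C₀ := fun y => by
    have := one_add_le_sup_seminorm_apply (𝕜 := ℝ) (m := (k, 2)) le_rfl le_rfl u y
    rwa [← norm_iteratedFDeriv_fderiv, ← norm_iteratedFDeriv_fderiv,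
      norm_iteratedFDeriv_zero] at this
  refine ⟨2 ^ k * C₀, fun v w hw => ?_⟩
  have hv : 0 < (1 + ‖v‖) ^ k := by positivity
  have hK : ∀ y ∈ closedBall v ‖w‖,
      ‖fderiv ℝ (fderiv ℝ u) y‖ ≤ 2 ^ k * C₀ / (1 + ‖v‖) ^ k := by
    intro y hy
    have hvy : 1 + ‖v‖ ≤ 2 * (1 + ‖y‖) := by
      have := norm_le_norm_add_norm_sub' v y
      rw [mem_closedBall, dist_eq_norm, ← norm_neg, neg_sub] at hy
      linarith [norm_nonneg y]
    rw [le_div_iff₀ hv]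
    calc ‖fderiv ℝ (fderiv ℝ u) y‖ * (1 + ‖v‖) ^ k
        ≤ ‖fderiv ℝ (fderiv ℝ u) y‖ * (2 * (1 + ‖y‖)) ^ k := by gcongr
      _ = 2 ^ k * ((1 + ‖y‖) ^ k * ‖fderiv ℝ (fderiv ℝ u) y‖) := by rw [mul_pow]; ring
      _ ≤ 2 ^ k * C₀ := by gcongr; exact hdecay y
  have hu' : Differentiable ℝ (fderiv ℝ u) := by
    simpa only [← funext (fderivCLM_apply ℝ u)] using (fderivCLM ℝ E ℝ u).differentiable
  have := abs_secondDiff_le_of_norm_fderiv_fderiv_le u.differentiable hu' hK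
  rwa [div_mul_eq_mul_div, le_div_iff₀ hv] at this

section Integral

variable [FiniteDimensional ℝ E] [MeasurableSpace E] [BorelSpace E] {μ : Measure E}
  [μ.IsAddHaarMeasure]

theorem exists_integral_abs_secondDiff_le (u : 𝓢(E, ℝ)) :
    ∃ C, ∀ w : E, ∫ v, |secondDiff u w v| ∂μ ≤ C * min (‖w‖ ^ 2) 1 := by
  set k := Module.finrank ℝ E + 1
  obtain ⟨C₁, hC₁⟩ := u.exists_abs_secondDiff_mul_one_add_pow_le k
  have hJ : Integrable (fun v : E => (1 + ‖v‖) ^ (-(k : ℝ))) μ :=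
    integrable_one_add_norm (by simp [k])
  refine ⟨max (C₁ * ∫ v, (1 + ‖v‖) ^ (-(k : ℝ)) ∂μ) (4 * ∫ v, |u v| ∂μ), fun w => ?_⟩
  rcases le_total ‖w‖ 1 with hw | hw
  · have hpt : ∀ v, |secondDiff u w v| ≤ C₁ * ‖w‖ ^ 2 * (1 + ‖v‖) ^ (-(k : ℝ)) := fun v => by
      rw [Real.rpow_neg (by positivity), Real.rpow_natCast, ← div_eq_mul_inv,
        le_div_iff₀ (by positivity)]
      exact hC₁ v w hw
    calc ∫ v, |secondDiff u w v| ∂μ ≤ ∫ v, C₁ * ‖w‖ ^ 2 * (1 + ‖v‖) ^ (-(k : ℝ)) ∂μ :=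
          integral_mono (u.integrable.secondDiff w).abs (hJ.const_mul _) hpt
      _ = (C₁ * ∫ v, (1 + ‖v‖) ^ (-(k : ℝ)) ∂μ) * ‖w‖ ^ 2 := by rw [integral_const_mul]; ring
      _ ≤ _ := by
        rw [min_eq_left (pow_le_one₀ (norm_nonneg w) hw)]
        gcongr
        exact le_max_left _ _
  · rw [min_eq_right (one_le_pow₀ hw), mul_one]
    exact (integral_abs_secondDiff_le u.integrable w).trans (le_max_right _ _)

theorem integrable_secondDiff_mul_norm_rpow_mul [Nontrivial E] (u : 𝓢(E, ℝ)) {s : ℝ}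
    (hs₁ : -(Module.finrank ℝ E : ℝ) - 2 < s) (hs₂ : s < -(Module.finrank ℝ E : ℝ))
    {g : E → ℝ} (hg : AEStronglyMeasurable g μ) {M : ℝ} (hM : ∀ v, |g v| ≤ M) :
    Integrable (fun p : E × E => secondDiff u p.2 p.1 * ‖p.2‖ ^ s * g p.1) (μ.prod μ) := by
  obtain ⟨C, hC⟩ := u.exists_integral_abs_secondDiff_le (μ := μ)
  have hM0 : 0 ≤ M := (abs_nonneg _).trans (hM 0)
  have hΔ : Continuous fun p : E × E => secondDiff u p.2 p.1 := by
    unfold secondDiff; fun_prop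
  have hmeas : AEStronglyMeasurable
      (fun p : E × E => secondDiff u p.2 p.1 * ‖p.2‖ ^ s * g p.1) (μ.prod μ) :=
    (hΔ.aestronglyMeasurable.mul
      (by fun_prop : Measurable fun p : E × E => ‖p.2‖ ^ s).aestronglyMeasurable).mul hg.comp_fst
  have hsec : ∀ w, Integrable (fun v => secondDiff u w v * ‖w‖ ^ s * g v) μ := fun w =>
    ((u.integrable.secondDiff w).mul_const _).mul_bdd hg
      (ae_of_all _ fun v => (Real.norm_eq_abs _).trans_le (hM v))
  refine (integrable_prod_iff' hmeas).mpr ⟨ae_of_all _ hsec, ?_⟩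
  refine ((integrable_min_sq_one_mul_norm_rpow μ hs₁ hs₂).const_mul (M * C)).mono'
    hmeas.norm.prod_swap.integral_prod_right' (ae_of_all _ fun w => ?_)
  have hw : 0 ≤ ‖w‖ ^ s := by positivity
  rw [Real.norm_of_nonneg (integral_nonneg fun _ => norm_nonneg _)]
  calc ∫ v, ‖secondDiff u w v * ‖w‖ ^ s * g v‖ ∂μ
      ≤ ∫ v, |secondDiff u w v| * (‖w‖ ^ s * M) ∂μ := by
        refine integral_mono (hsec w).norm ((u.integrable.secondDiff w).abs.mul_const _)
          fun v => ?_
        simp only [norm_mul, Real.norm_eq_abs, abs_of_nonneg hw, mul_assoc]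
        gcongr
        exact hM v
    _ = ‖w‖ ^ s * M * ∫ v, |secondDiff u w v| ∂μ := by rw [integral_mul_const]; ring
    _ ≤ ‖w‖ ^ s * M * (C * min (‖w‖ ^ 2) 1) := by gcongr; exact hC w
    _ = M * C * (min (‖w‖ ^ 2) 1 * ‖w‖ ^ s) := by ring

end Integral

end SchwartzMap

/-- for a Schwartz function `u` on `ℝ^d`, `α ∈ (0,2)` and a convex `C²`
function `ψ : ℝ → ℝ`, one has `∫ (Lu)(v) ψ'(u(v)) dv ≤ 0`, where
`(Lu)(v) = (1/2) ∫ (u(v+w) + u(v-w) - 2u(v)) |w|^{-d-α} dw` is the fractional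
Laplacian up to a positive normalizing constant. -/
theorem stmt_16 (d : ℕ) (hd : 1 ≤ d) (α : ℝ) (hα : α ∈ Set.Ioo (0 : ℝ) 2)
    (u : SchwartzMap (EuclideanSpace ℝ (Fin d)) ℝ) (ψ : ℝ → ℝ)
    (hψ : ContDiff ℝ 2 ψ) (hconv : ∀ x : ℝ, 0 ≤ deriv (deriv ψ) x) :
    (∫ v : EuclideanSpace ℝ (Fin d),
      ((1 : ℝ) / 2 * ∫ w : EuclideanSpace ℝ (Fin d),
        (u (v + w) + u (v - w) - 2 * u v) * ‖w‖ ^ (-(d : ℝ) - α)) * deriv ψ (u v)) ≤ 0 := by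
  obtain ⟨hα0, hα2⟩ := hα
  have : Nonempty (Fin d) := ⟨⟨0, hd⟩⟩
  have hdim : (Module.finrank ℝ (EuclideanSpace ℝ (Fin d)) : ℝ) = d := by simp
  have hmono : Monotone (deriv ψ) := monotone_of_deriv_nonneg hψ.differentiable_deriv_two hconv
  set B := SchwartzMap.seminorm ℝ 0 0 u
  have hbdd : ∀ v, |deriv ψ (u v)| ≤ max |deriv ψ (-B)| |deriv ψ B| := fun v =>
    have hv := abs_le.mp (u.norm_le_seminorm ℝ v)
    abs_le_max_abs_abs (hmono hv.1) (hmono hv.2)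
  have hF := u.integrable_secondDiff_mul_norm_rpow_mul (μ := volume) (s := -(d : ℝ) - α)
    (by linarith) (by linarith)
    (hmono.measurable.comp u.continuous.measurable).aestronglyMeasurable hbdd
  calc _ = 1 / 2 * ∫ v, ∫ w, secondDiff u w v * ‖w‖ ^ (-(d : ℝ) - α) * deriv ψ (u v) := by
        simp only [mul_assoc, integral_const_mul, ← integral_mul_const]
        rfl
    _ = 1 / 2 * ∫ w, ‖w‖ ^ (-(d : ℝ) - α) * ∫ v, secondDiff u w v * deriv ψ (u v) := by
        rw [integral_integral_swap hF]
        congr 2 with w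
        rw [← integral_const_mul]
        congr 1 with v
        ring
    _ ≤ 0 := mul_nonpos_of_nonneg_of_nonpos (by norm_num) <| integral_nonpos fun w =>
        mul_nonpos_of_nonneg_of_nonpos (by positivity)
          (integral_secondDiff_mul_monotone_comp_nonpos u.integrable hmono hbdd w)
end
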